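/- arXiv:2305.05620 — 5 statements merged into one kernel-verified Lean document; each statement's English description precedes it below -/
import Mathlib

section
/- Let r ≠ 0, x_1, x_2 be real constants and let x : ℝ → ℝ be a solution of the Riccati equation with constant coefficients x'(t) = r·(x(t) − x_1)·(x(t) − x_2). Then for every n ≥ 1 and every t, the n-th derivative of x satisfies x^(n)(t) = r^n · Σ_{k=0}^{n−1} ⟨n,k⟩ · (x(t) − x_1)^{k+1} · (x(t) − x_2)^{n−k}, where ⟨n,k⟩ denotes the Eulerian number. -/
open Finset Equiv

noncomputable def eulerianNumber (n k : ℕ) : ℕ :=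
  Nat.card {σ : Equiv.Perm (Fin n) //
    Nat.card {i : Fin n // ∃ h : (i : ℕ) + 1 < n, σ i < σ ⟨(i : ℕ) + 1, h⟩} = k}

open scoped Classical in
noncomputable def ascSet {n : ℕ} (σ : Equiv.Perm (Fin n)) : Finset (Fin n) :=
  Finset.univ.filter fun i => ∃ h : (i : ℕ) + 1 < n, σ i < σ ⟨(i : ℕ) + 1, h⟩

lemma mem_ascSet {n : ℕ} {σ : Equiv.Perm (Fin n)} {i : Fin n} :
    i ∈ ascSet σ ↔ ∃ h : (i : ℕ) + 1 < n, σ i < σ ⟨(i : ℕ) + 1, h⟩ := by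
  classical simp [ascSet]

lemma natCard_asc {n : ℕ} (σ : Equiv.Perm (Fin n)) :
    Nat.card {i : Fin n // ∃ h : (i : ℕ) + 1 < n, σ i < σ ⟨(i : ℕ) + 1, h⟩} = (ascSet σ).card := by
  classical
  rw [Nat.card_eq_fintype_card, Fintype.card_subtype]
  congr 1

lemma eulerian_eq_card (n k : ℕ) :
    eulerianNumber n k =
      (Finset.univ.filter fun σ : Equiv.Perm (Fin n) => (ascSet σ).card = k).card := by
  classical
  rw [eulerianNumber, Nat.card_congr (Equiv.subtypeEquivRight (fun σ => by rw [natCard_asc])),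
    Nat.card_eq_fintype_card, Fintype.card_subtype]

/-- Insert the largest element at position `p`. -/
noncomputable def ins {n : ℕ} (τ : Equiv.Perm (Fin n)) (p : Fin (n + 1)) :
    Equiv.Perm (Fin (n + 1)) :=
  (finSuccEquiv' p).trans ((Equiv.optionCongr τ).trans (finSuccEquiv' (Fin.last n)).symm)

lemma ins_apply_self {n : ℕ} (τ : Equiv.Perm (Fin n)) (p : Fin (n + 1)) :
    ins τ p p = Fin.last n := by
  simp [ins]

lemma ins_apply_succAbove {n : ℕ} (τ : Equiv.Perm (Fin n)) (p : Fin (n + 1)) (j : Fin n) :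
    ins τ p (p.succAbove j) = (τ j).castSucc := by
  simp [ins, Fin.succAbove_last]

lemma ins_bijective (n : ℕ) :
    Function.Bijective (fun z : Equiv.Perm (Fin n) × Fin (n + 1) => ins z.1 z.2) := by
  rw [Fintype.bijective_iff_injective_and_card]
  constructor
  · rintro ⟨τ, p⟩ ⟨τ', p'⟩ h
    simp only at h
    have hp : p = p' := by
      by_contra hne
      obtain ⟨j, hj⟩ := Fin.exists_succAbove_eq hne
      have h1 : ins τ p p = ins τ' p' p := by rw [h]
      rw [ins_apply_self] at h1
      rw [show p = p'.succAbove j from hj.symm, ins_apply_succAbove] at h1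
      exact absurd h1.symm (Fin.castSucc_lt_last _).ne
    subst hp
    have hτ : τ = τ' := by
      apply Equiv.ext; intro j
      have h1 : ins τ p (p.succAbove j) = ins τ' p (p.succAbove j) := by rw [h]
      rw [ins_apply_succAbove, ins_apply_succAbove] at h1
      exact Fin.castSucc_injective _ h1
    rw [hτ]
  · simp [Fintype.card_perm, Nat.factorial_succ, mul_comm]

lemma ins_lt {n : ℕ} (τ : Equiv.Perm (Fin n)) (p : Fin (n + 1)) {i : Fin (n + 1)}
    (h : (i : ℕ) < (p : ℕ)) :
    ins τ p i = (τ ⟨i, lt_of_lt_of_le h (Nat.lt_succ_iff.mp p.isLt)⟩).castSucc := by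
  have hi : i = p.succAbove ⟨(i : ℕ), lt_of_lt_of_le h (Nat.lt_succ_iff.mp p.isLt)⟩ := by
    rw [Fin.succAbove_of_castSucc_lt]
    · exact Fin.ext rfl
    · exact Fin.lt_def.mpr h
  conv_lhs => rw [hi]
  exact ins_apply_succAbove τ p _

lemma ins_gt {n : ℕ} (τ : Equiv.Perm (Fin n)) (p : Fin (n + 1)) {i : Fin (n + 1)}
    (h : (p : ℕ) < (i : ℕ)) :
    ins τ p i = (τ ⟨(i : ℕ) - 1, by omega⟩).castSucc := by
  have hi : i = p.succAbove ⟨(i : ℕ) - 1, by omega⟩ := by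
    rw [Fin.succAbove_of_le_castSucc]
    · exact Fin.ext (by simp [Fin.val_succ]; omega)
    · exact Fin.le_def.mpr (by simp [Fin.coe_castSucc]; omega)
  conv_lhs => rw [hi]
  exact ins_apply_succAbove τ p _

open scoped Classical in
noncomputable def asc2 {n : ℕ} (σ : Equiv.Perm (Fin (n + 1))) : Finset (Fin n) :=
  Finset.univ.filter fun j => σ j.castSucc < σ j.succ

lemma mem_asc2 {n : ℕ} {σ : Equiv.Perm (Fin (n + 1))} {j : Fin n} :
    j ∈ asc2 σ ↔ σ j.castSucc < σ j.succ := by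
  classical simp [asc2]

lemma card_asc2 {n : ℕ} (σ : Equiv.Perm (Fin (n + 1))) :
    (ascSet σ).card = (asc2 σ).card := by
  have key : ∀ i ∈ ascSet σ, (i : ℕ) < n := fun i hi => by
    obtain ⟨h, -⟩ := mem_ascSet.mp hi; omega
  apply Finset.card_bij (fun (i : Fin (n + 1)) (hi : i ∈ ascSet σ) => (⟨(i : ℕ), key i hi⟩ : Fin n))
  · intro i hi
    obtain ⟨h, hlt⟩ := mem_ascSet.mp hi
    rw [mem_asc2]
    have e1 : (⟨(i : ℕ), key i hi⟩ : Fin n).castSucc = i := Fin.ext rfl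
    have e2 : (⟨(i : ℕ), key i hi⟩ : Fin n).succ = ⟨(i : ℕ) + 1, h⟩ := Fin.ext rfl
    rw [e1, e2]
    exact hlt
  · intro i₁ h₁ i₂ h₂ h
    have := congrArg Fin.val h
    exact Fin.ext this
  · intro j hj
    rw [mem_asc2] at hj
    have hb : ((j.castSucc : Fin (n + 1)) : ℕ) + 1 < n + 1 := by
      simp only [Fin.coe_castSucc]; omega
    refine ⟨j.castSucc, mem_ascSet.mpr ⟨hb, ?_⟩, Fin.ext rfl⟩
    have e2 : (⟨((j.castSucc : Fin (n + 1)) : ℕ) + 1, hb⟩ : Fin (n + 1)) = j.succ := Fin.ext rfl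
    rw [e2]
    exact hj

section helpers
variable {n : ℕ} (τ : Equiv.Perm (Fin n)) (p : Fin (n + 1))

lemma ins_cs_lt {j : Fin n} (h : (j : ℕ) < (p : ℕ)) :
    ins τ p j.castSucc = (τ j).castSucc := by
  rw [ins_lt τ p (show ((j.castSucc : Fin (n + 1)) : ℕ) < (p : ℕ) from h)]
  congr 1

lemma ins_succ_lt {j : Fin n} (hb : (j : ℕ) + 1 < n) (h : (j : ℕ) + 1 < (p : ℕ)) :
    ins τ p j.succ = (τ ⟨(j : ℕ) + 1, hb⟩).castSucc := by
  rw [ins_lt τ p (show ((j.succ : Fin (n + 1)) : ℕ) < (p : ℕ) from h)]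
  congr 1

lemma ins_cs_gt {j : Fin n} (hb : (j : ℕ) - 1 < n) (h : (p : ℕ) < (j : ℕ)) :
    ins τ p j.castSucc = (τ ⟨(j : ℕ) - 1, hb⟩).castSucc := by
  rw [ins_gt τ p (show (p : ℕ) < ((j.castSucc : Fin (n + 1)) : ℕ) from h)]
  congr 1

lemma ins_succ_gt {j : Fin n} (h : (p : ℕ) ≤ (j : ℕ)) :
    ins τ p j.succ = (τ j).castSucc := by
  rw [ins_gt τ p (show (p : ℕ) < ((j.succ : Fin (n + 1)) : ℕ) by
    simp only [Fin.val_succ]; omega)]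
  congr 1

lemma ins_cs_self {j : Fin n} (h : (j : ℕ) = (p : ℕ)) :
    ins τ p j.castSucc = Fin.last n := by
  rw [show j.castSucc = p from Fin.ext h, ins_apply_self]

lemma ins_succ_self {j : Fin n} (h : (j : ℕ) + 1 = (p : ℕ)) :
    ins τ p j.succ = Fin.last n := by
  rw [show j.succ = p from Fin.ext h, ins_apply_self]

end helpers

lemma notlt_last {n : ℕ} (x : Fin (n + 1)) : ¬ (Fin.last n < x) := not_lt.mpr (Fin.le_last x)

lemma asc2_ins_zero_card {n : ℕ} (τ : Equiv.Perm (Fin n)) :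
    (asc2 (ins τ 0)).card = (ascSet τ).card := by
  symm
  have key : ∀ a ∈ ascSet τ, (a : ℕ) + 1 < n := fun a ha => (mem_ascSet.mp ha).1
  apply Finset.card_bij (fun (a : Fin n) (ha : a ∈ ascSet τ) => (⟨(a : ℕ) + 1, key a ha⟩ : Fin n))
  · intro a ha
    obtain ⟨hb, hlt⟩ := mem_ascSet.mp ha
    rw [mem_asc2]
    rw [ins_cs_gt τ 0 (by omega) (by simp), ins_succ_gt τ 0 (by simp)]
    rw [Fin.castSucc_lt_castSucc_iff]
    exact hlt
  · intro a₁ h₁ a₂ h₂ h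
    have := congrArg Fin.val h
    simp only at this
    exact Fin.ext (by omega)
  · intro j hj
    rw [mem_asc2] at hj
    rcases Nat.eq_zero_or_pos (j : ℕ) with h0 | h0
    · exfalso
      rw [ins_cs_self τ 0 (by simp [h0]), ins_succ_gt τ 0 (by simp)] at hj
      exact notlt_last _ hj
    · have hb : (j : ℕ) - 1 + 1 < n := by omega
      rw [ins_cs_gt τ 0 (by omega) (by simpa), ins_succ_gt τ 0 (by simp),
        Fin.castSucc_lt_castSucc_iff] at hj
      refine ⟨⟨(j : ℕ) - 1, by omega⟩, mem_ascSet.mpr ⟨hb, ?_⟩, Fin.ext (by simp; omega)⟩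
      show τ ⟨(j : ℕ) - 1, by omega⟩ < τ ⟨(j : ℕ) - 1 + 1, hb⟩
      rw [show (⟨(j : ℕ) - 1 + 1, hb⟩ : Fin n) = ⟨(j : ℕ), j.isLt⟩ from Fin.ext (by
        simp only [Fin.val_mk]; omega)]
      exact hj

lemma asc2_ins_succ_card {n : ℕ} (τ : Equiv.Perm (Fin n)) (q : Fin n) :
    (asc2 (ins τ q.succ)).card = (insert q (ascSet τ)).card := by
  symm
  have key : ∀ a ∈ insert q (ascSet τ), (q : ℕ) < (a : ℕ) → (a : ℕ) + 1 < n := by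
    intro a ha hqa
    rcases Finset.mem_insert.mp ha with h | h
    · rw [h] at hqa; omega
    · exact (mem_ascSet.mp h).1
  apply Finset.card_bij (fun (a : Fin n) (ha : a ∈ insert q (ascSet τ)) =>
    if h : (a : ℕ) ≤ (q : ℕ) then a else (⟨(a : ℕ) + 1, key a ha (by omega)⟩ : Fin n))
  · intro a ha
    rw [mem_asc2]
    by_cases h : (a : ℕ) ≤ (q : ℕ)
    · rw [dif_pos h]
      rcases eq_or_lt_of_le h with heq | hlt
      · rw [ins_cs_lt τ q.succ (by simp only [Fin.val_succ]; omega),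
          ins_succ_self τ q.succ (by simp only [Fin.val_succ]; omega)]
        exact Fin.castSucc_lt_last _
      · have ha' : a ∈ ascSet τ := by
          rcases Finset.mem_insert.mp ha with h' | h'
          · exfalso; rw [h'] at hlt; omega
          · exact h'
        obtain ⟨hb, hlt'⟩ := mem_ascSet.mp ha'
        rw [ins_cs_lt τ q.succ (by simp only [Fin.val_succ]; omega),
          ins_succ_lt τ q.succ hb (by simp only [Fin.val_succ]; omega),
          Fin.castSucc_lt_castSucc_iff]
        exact hlt'
    · rw [dif_neg h]
      have ha' : a ∈ ascSet τ := by
        rcases Finset.mem_insert.mp ha with h' | h'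
        · exfalso; rw [h'] at h; omega
        · exact h'
      obtain ⟨hb, hlt'⟩ := mem_ascSet.mp ha'
      rw [ins_cs_gt τ q.succ (by omega) (by simp only [Fin.val_succ, Fin.val_mk]; omega),
        ins_succ_gt τ q.succ (by simp only [Fin.val_succ, Fin.val_mk]; omega),
        Fin.castSucc_lt_castSucc_iff]
      exact hlt'
  · intro a₁ h₁ a₂ h₂ h
    have hv := congrArg Fin.val h
    split_ifs at hv with c1 c2 c2 <;>
      first
      | exact Fin.ext hv
      | (simp only [Fin.val_mk] at hv; exact Fin.ext (by omega))
  · intro j hj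
    rw [mem_asc2] at hj
    rcases lt_trichotomy (j : ℕ) (q : ℕ) with hlt | heq | hgt
    · have hb : (j : ℕ) + 1 < n := by omega
      rw [ins_cs_lt τ q.succ (by simp only [Fin.val_succ]; omega),
        ins_succ_lt τ q.succ hb (by simp only [Fin.val_succ]; omega),
        Fin.castSucc_lt_castSucc_iff] at hj
      exact ⟨j, Finset.mem_insert_of_mem (mem_ascSet.mpr ⟨hb, hj⟩),
        dif_pos (by omega)⟩
    · exact ⟨q, Finset.mem_insert_self q _, by
        rw [dif_pos le_rfl]; exact Fin.ext heq.symm⟩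
    · rcases eq_or_lt_of_le (Nat.succ_le_of_lt hgt) with heq1 | hgt1
      · exfalso
        rw [ins_cs_self τ q.succ (by simp only [Fin.val_succ]; omega)] at hj
        exact notlt_last _ hj
      · have hb : (j : ℕ) - 1 + 1 < n := by omega
        rw [ins_cs_gt τ q.succ (by omega) (by simp only [Fin.val_succ]; omega),
          ins_succ_gt τ q.succ (by simp only [Fin.val_succ]; omega),
          Fin.castSucc_lt_castSucc_iff] at hj
        have hmem : (⟨(j : ℕ) - 1, by omega⟩ : Fin n) ∈ ascSet τ := by
          refine mem_ascSet.mpr ⟨hb, ?_⟩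
          show τ ⟨(j : ℕ) - 1, by omega⟩ < τ ⟨(j : ℕ) - 1 + 1, hb⟩
          rw [show (⟨(j : ℕ) - 1 + 1, hb⟩ : Fin n) = ⟨(j : ℕ), j.isLt⟩ from Fin.ext (by
            simp only [Fin.val_mk]; omega)]
          exact hj
        refine ⟨⟨(j : ℕ) - 1, by omega⟩, Finset.mem_insert_of_mem hmem, ?_⟩
        rw [dif_neg (by simp only [Fin.val_mk]; omega)]
        exact Fin.ext (by simp only [Fin.val_mk]; omega)

open scoped Classical in
lemma eulerian_succ_sum (n k : ℕ) :
    eulerianNumber (n + 1) k = ∑ τ : Equiv.Perm (Fin n),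
      (Finset.univ.filter fun p : Fin (n + 1) => (asc2 (ins τ p)).card = k).card := by
  classical
  have h1 : eulerianNumber (n + 1) k
      = Nat.card {σ : Equiv.Perm (Fin (n + 1)) // (asc2 σ).card = k} := by
    rw [eulerianNumber]
    exact Nat.card_congr (Equiv.subtypeEquivRight fun σ => by
      rw [natCard_asc, card_asc2])
  have e1 : {z : Equiv.Perm (Fin n) × Fin (n + 1) // (asc2 (ins z.1 z.2)).card = k}
      ≃ {σ : Equiv.Perm (Fin (n + 1)) // (asc2 σ).card = k} :=
    Equiv.subtypeEquiv (Equiv.ofBijective _ (ins_bijective n)) (fun z => Iff.rfl)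
  have e2 := Equiv.subtypeProdEquivSigmaSubtype
    (fun (τ : Equiv.Perm (Fin n)) (p : Fin (n + 1)) => (asc2 (ins τ p)).card = k)
  rw [h1, ← Nat.card_congr e1, Nat.card_congr e2, Nat.card_eq_fintype_card,
    Fintype.card_sigma]
  exact Finset.sum_congr rfl fun τ _ => by rw [Fintype.card_subtype]

open scoped Classical in
lemma inner_count {n : ℕ} (τ : Equiv.Perm (Fin n)) (k : ℕ) :
    (Finset.univ.filter fun p : Fin (n + 1) => (asc2 (ins τ p)).card = k).card =
      if (ascSet τ).card = k then k + 1
      else if (ascSet τ).card + 1 = k then n - (ascSet τ).card else 0 := by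
  classical
  set A := ascSet τ with hA
  have hg0 : (asc2 (ins τ (0 : Fin (n + 1)))).card = A.card := asc2_ins_zero_card τ
  have hgs : ∀ q : Fin n, (asc2 (ins τ q.succ)).card
      = if q ∈ A then A.card else A.card + 1 := by
    intro q
    rw [asc2_ins_succ_card]
    by_cases hq : q ∈ A
    · rw [if_pos hq, Finset.insert_eq_self.mpr hq]
    · rw [if_neg hq, Finset.card_insert_of_notMem hq]
  by_cases hk : A.card = k
  · rw [if_pos hk]
    have hset : (Finset.univ.filter fun p : Fin (n + 1) => (asc2 (ins τ p)).card = k)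
        = insert 0 (A.image Fin.succ) := by
      ext p
      simp only [Finset.mem_filter, Finset.mem_univ, true_and, Finset.mem_insert,
        Finset.mem_image]
      induction p using Fin.cases with
      | zero =>
        simp [hg0, hk]
      | succ q =>
        rw [hgs q]
        constructor
        · intro h
          by_cases hq : q ∈ A
          · exact Or.inr ⟨q, hq, rfl⟩
          · rw [if_neg hq] at h; omega
        · rintro (h | ⟨b, hb, hbe⟩)
          · exact absurd h (Fin.succ_ne_zero q)
          · have hbq : b = q := Fin.succ_injective n hbe
            subst hbq
            rw [if_pos hb]; exact hk
    rw [hset, Finset.card_insert_of_notMem (by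
      simp only [Finset.mem_image, not_exists]
      intro b
      exact fun h => Fin.succ_ne_zero b h.2)]
    rw [Finset.card_image_of_injective _ (Fin.succ_injective n)]
    omega
  · rw [if_neg hk]
    by_cases hk1 : A.card + 1 = k
    · rw [if_pos hk1]
      have hset : (Finset.univ.filter fun p : Fin (n + 1) => (asc2 (ins τ p)).card = k)
          = (Aᶜ).image Fin.succ := by
        ext p
        simp only [Finset.mem_filter, Finset.mem_univ, true_and, Finset.mem_image,
          Finset.mem_compl]
        induction p using Fin.cases with
        | zero =>
          rw [hg0]
          constructor
          · intro h; omega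
          · rintro ⟨b, hb, hbe⟩
            exact absurd hbe (Fin.succ_ne_zero b)
        | succ q =>
          rw [hgs q]
          constructor
          · intro h
            by_cases hq : q ∈ A
            · rw [if_pos hq] at h; omega
            · exact ⟨q, hq, rfl⟩
          · rintro ⟨b, hb, hbe⟩
            have hbq : b = q := Fin.succ_injective n hbe
            subst hbq
            rw [if_neg hb]; exact hk1
      rw [hset, Finset.card_image_of_injective _ (Fin.succ_injective n),
        Finset.card_compl, Fintype.card_fin]
    · rw [if_neg hk1]
      rw [Finset.card_eq_zero, Finset.filter_eq_empty_iff]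
      intro p _
      induction p using Fin.cases with
      | zero => rw [hg0]; omega
      | succ q =>
        rw [hgs q]
        by_cases hq : q ∈ A
        · rw [if_pos hq]; omega
        · rw [if_neg hq]; omega

lemma eulerian_zero_zero : eulerianNumber 0 0 = 1 := by
  classical
  rw [eulerian_eq_card]
  have h : ∀ σ : Equiv.Perm (Fin 0), (ascSet σ).card = 0 := fun σ => by
    rw [Finset.card_eq_zero]
    exact Finset.eq_empty_of_isEmpty _
  rw [Finset.filter_true_of_mem (fun σ _ => h σ), Finset.card_univ, Fintype.card_perm]
  simp

lemma eulerian_succ_zero (n : ℕ) : eulerianNumber (n + 1) 0 = eulerianNumber n 0 := by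
  classical
  rw [eulerian_succ_sum]
  have h : ∀ τ : Equiv.Perm (Fin n),
      (Finset.univ.filter fun p : Fin (n + 1) => (asc2 (ins τ p)).card = 0).card
        = if (ascSet τ).card = 0 then 1 else 0 := by
    intro τ
    rw [inner_count]
    by_cases h : (ascSet τ).card = 0
    · rw [if_pos h, if_pos h]
    · rw [if_neg h, if_neg h, if_neg (by omega)]
  rw [Finset.sum_congr rfl fun τ _ => h τ, ← Finset.sum_filter, Finset.sum_const,
    smul_eq_mul, mul_one, eulerian_eq_card]

lemma eulerian_one_zero : eulerianNumber 1 0 = 1 := by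
  rw [eulerian_succ_zero, eulerian_zero_zero]

lemma eulerian_top {m k : ℕ} (h : m + 1 ≤ k) : eulerianNumber (m + 1) k = 0 := by
  classical
  rw [eulerian_eq_card, Finset.card_eq_zero, Finset.filter_eq_empty_iff]
  intro σ _
  rw [card_asc2]
  have h2 := Finset.card_le_univ (asc2 σ)
  have h3 : Fintype.card (Fin m) = m := Fintype.card_fin m
  omega

lemma eulerian_rec (n k : ℕ) :
    eulerianNumber (n + 1) (k + 1)
      = (k + 2) * eulerianNumber n (k + 1) + (n - k) * eulerianNumber n k := by
  classical
  rw [eulerian_succ_sum]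
  have h : ∀ τ : Equiv.Perm (Fin n),
      (Finset.univ.filter fun p : Fin (n + 1) => (asc2 (ins τ p)).card = k + 1).card
        = (if (ascSet τ).card = k + 1 then k + 2 else 0)
          + (if (ascSet τ).card = k then n - k else 0) := by
    intro τ
    rw [inner_count]
    by_cases h1 : (ascSet τ).card = k + 1
    · rw [if_pos h1, if_pos h1, if_neg (by omega)]
    · rw [if_neg h1, if_neg h1]
      by_cases h2 : (ascSet τ).card = k
      · rw [if_pos (by omega), if_pos h2, h2]; omega
      · rw [if_neg (by omega), if_neg h2]
  rw [Finset.sum_congr rfl fun τ _ => h τ, Finset.sum_add_distrib]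
  congr 1
  · rw [← Finset.sum_filter, Finset.sum_const, smul_eq_mul, eulerian_eq_card, mul_comm]
  · rw [← Finset.sum_filter, Finset.sum_const, smul_eq_mul, eulerian_eq_card, mul_comm]

lemma sum_step (m : ℕ) (U V : ℝ) :
    (∑ k ∈ Finset.range (m + 2), (eulerianNumber (m + 2) k : ℝ) * U ^ (k + 1) * V ^ (m + 2 - k))
      = ∑ k ∈ Finset.range (m + 1), (eulerianNumber (m + 1) k : ℝ) *
          (((k : ℝ) + 1) * U ^ (k + 1) * V ^ (m + 1 - k + 1)
            + ((m + 1 - k : ℕ) : ℝ) * U ^ (k + 2) * V ^ (m + 1 - k)) := by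
  have ha : ∀ k ∈ Finset.range (m + 1),
      (eulerianNumber (m + 2) (k + 1) : ℝ) * U ^ (k + 1 + 1) * V ^ (m + 2 - (k + 1))
        = ((k : ℝ) + 2) * (eulerianNumber (m + 1) (k + 1) : ℝ) * U ^ (k + 2) * V ^ (m + 1 - k)
          + ((m + 1 - k : ℕ) : ℝ) * (eulerianNumber (m + 1) k : ℝ) * U ^ (k + 2) * V ^ (m + 1 - k) := by
    intro k hk
    have he : m + 2 - (k + 1) = m + 1 - k := by omega
    rw [he, eulerian_rec (m + 1) k]
    push_cast
    ring
  rw [Finset.sum_range_succ', Finset.sum_congr rfl ha, Finset.sum_add_distrib]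
  have hsplit : ∀ k ∈ Finset.range (m + 1),
      (eulerianNumber (m + 1) k : ℝ) *
          (((k : ℝ) + 1) * U ^ (k + 1) * V ^ (m + 1 - k + 1)
            + ((m + 1 - k : ℕ) : ℝ) * U ^ (k + 2) * V ^ (m + 1 - k))
        = ((k : ℝ) + 1) * (eulerianNumber (m + 1) k : ℝ) * U ^ (k + 1) * V ^ (m + 1 - k + 1)
          + ((m + 1 - k : ℕ) : ℝ) * (eulerianNumber (m + 1) k : ℝ) * U ^ (k + 2) * V ^ (m + 1 - k) := by
    intro k hk; ring
  rw [Finset.sum_congr rfl hsplit, Finset.sum_add_distrib, add_right_comm]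
  congr 1
  rw [Finset.sum_range_succ' (fun k => ((k : ℝ) + 1) * (eulerianNumber (m + 1) k : ℝ)
    * U ^ (k + 1) * V ^ (m + 1 - k + 1)) m]
  have hb : ∀ k ∈ Finset.range m,
      ((((k : ℕ) + 1 : ℕ) : ℝ) + 1) * (eulerianNumber (m + 1) (k + 1) : ℝ)
          * U ^ (k + 1 + 1) * V ^ (m + 1 - (k + 1) + 1)
        = ((k : ℝ) + 2) * (eulerianNumber (m + 1) (k + 1) : ℝ) * U ^ (k + 2) * V ^ (m + 1 - k) := by
    intro k hk
    rw [Finset.mem_range] at hk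
    have he : m + 1 - (k + 1) + 1 = m + 1 - k := by omega
    rw [he]
    push_cast
    ring
  rw [Finset.sum_congr rfl hb]
  have hlast : (∑ k ∈ Finset.range (m + 1),
      ((k : ℝ) + 2) * (eulerianNumber (m + 1) (k + 1) : ℝ) * U ^ (k + 2) * V ^ (m + 1 - k))
      = ∑ k ∈ Finset.range m,
        ((k : ℝ) + 2) * (eulerianNumber (m + 1) (k + 1) : ℝ) * U ^ (k + 2) * V ^ (m + 1 - k) := by
    rw [Finset.sum_range_succ, eulerian_top (le_refl (m + 1))]
    simp
  rw [hlast, eulerian_succ_zero (m + 1),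
    show m + 2 - 0 = m + 1 - 0 + 1 by omega]
  push_cast
  ring

/-- For a solution x of the Riccati equation x' = r(x − x₁)(x − x₂)
with constant coefficients (r ≠ 0), the n-th derivative (n ≥ 1) is
x⁽ⁿ⁾(t) = rⁿ · Σ_{k=0}^{n−1} ⟨n,k⟩ (x(t) − x₁)^{k+1} (x(t) − x₂)^{n−k}. -/
theorem riccati_iterated_deriv_eulerian
    (r x₁ x₂ : ℝ) (hr : r ≠ 0) (x : ℝ → ℝ)
    (hdiff : Differentiable ℝ x)
    (hode : ∀ t, deriv x t = r * (x t - x₁) * (x t - x₂)) :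
    ∀ n : ℕ, 1 ≤ n → ∀ t : ℝ,
      iteratedDeriv n x t =
        r ^ n * ∑ k ∈ Finset.range n,
          (eulerianNumber n k : ℝ) * (x t - x₁) ^ (k + 1) * (x t - x₂) ^ (n - k) := by
  have hx : ∀ t, HasDerivAt x (r * (x t - x₁) * (x t - x₂)) t := fun t => by
    have h := (hdiff t).hasDerivAt
    rwa [hode t] at h
  intro n hn
  induction n, hn using Nat.le_induction with
  | base =>
    intro t
    rw [iteratedDeriv_one, hode t]
    simp [eulerian_one_zero]
    ring
  | succ n hn IH =>
    intro t
    -- derivative of the closed form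
    have hterm : ∀ (k : ℕ) (s : ℝ), HasDerivAt
        (fun y => (eulerianNumber n k : ℝ) * (x y - x₁) ^ (k + 1) * (x y - x₂) ^ (n - k))
        ((eulerianNumber n k : ℝ) * (((k + 1 : ℕ) : ℝ) * (x s - x₁) ^ k
            * (r * (x s - x₁) * (x s - x₂))) * (x s - x₂) ^ (n - k)
          + (eulerianNumber n k : ℝ) * (x s - x₁) ^ (k + 1)
            * (((n - k : ℕ) : ℝ) * (x s - x₂) ^ (n - k - 1)
              * (r * (x s - x₁) * (x s - x₂)))) s := by
      intro k s
      have hu : HasDerivAt (fun y => x y - x₁) (r * (x s - x₁) * (x s - x₂)) s :=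
        (hx s).sub_const x₁
      have hv : HasDerivAt (fun y => x y - x₂) (r * (x s - x₁) * (x s - x₂)) s :=
        (hx s).sub_const x₂
      exact ((hu.pow (k + 1)).const_mul _).mul (hv.pow (n - k))
    have hD : ∀ s, HasDerivAt (fun y => r ^ n * ∑ k ∈ Finset.range n,
        (eulerianNumber n k : ℝ) * (x y - x₁) ^ (k + 1) * (x y - x₂) ^ (n - k))
        (r ^ n * ∑ k ∈ Finset.range n,
          ((eulerianNumber n k : ℝ) * (((k + 1 : ℕ) : ℝ) * (x s - x₁) ^ k
            * (r * (x s - x₁) * (x s - x₂))) * (x s - x₂) ^ (n - k)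
          + (eulerianNumber n k : ℝ) * (x s - x₁) ^ (k + 1)
            * (((n - k : ℕ) : ℝ) * (x s - x₂) ^ (n - k - 1)
              * (r * (x s - x₁) * (x s - x₂))))) s := by
      intro s
      exact HasDerivAt.const_mul _ (HasDerivAt.fun_sum fun k _ => hterm k s)
    have hfun : iteratedDeriv n x = fun s => r ^ n * ∑ k ∈ Finset.range n,
        (eulerianNumber n k : ℝ) * (x s - x₁) ^ (k + 1) * (x s - x₂) ^ (n - k) :=
      funext fun s => IH s
    rw [iteratedDeriv_succ, hfun, (hD t).deriv]
    -- now pure algebra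
    obtain ⟨m, rfl⟩ : ∃ m, n = m + 1 := ⟨n - 1, by omega⟩
    rw [show m + 1 + 1 = m + 2 from rfl, sum_step m (x t - x₁) (x t - x₂)]
    have hper : ∀ k ∈ Finset.range (m + 1),
        ((eulerianNumber (m + 1) k : ℝ) * (((k + 1 : ℕ) : ℝ) * (x t - x₁) ^ k
            * (r * (x t - x₁) * (x t - x₂))) * (x t - x₂) ^ (m + 1 - k)
          + (eulerianNumber (m + 1) k : ℝ) * (x t - x₁) ^ (k + 1)
            * (((m + 1 - k : ℕ) : ℝ) * (x t - x₂) ^ (m + 1 - k - 1)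
              * (r * (x t - x₁) * (x t - x₂))))
        = r * ((eulerianNumber (m + 1) k : ℝ) *
            (((k : ℝ) + 1) * (x t - x₁) ^ (k + 1) * (x t - x₂) ^ (m + 1 - k + 1)
              + ((m + 1 - k : ℕ) : ℝ) * (x t - x₁) ^ (k + 2) * (x t - x₂) ^ (m + 1 - k))) := by
      intro k hk
      rw [Finset.mem_range] at hk
      obtain ⟨j, hj⟩ : ∃ j, m - k = j := ⟨m - k, rfl⟩
      rw [show m + 1 - k - 1 = j by omega, show m + 1 - k + 1 = j + 2 by omega,
        show m + 1 - k = j + 1 by omega]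
      push_cast
      ring
    rw [Finset.sum_congr rfl hper, ← Finset.mul_sum, ← mul_assoc, ← pow_succ]
end

section
/- Let x(t) = 1/(1 + e^{−t}) be the standard logistic function. Then for every integer n ≥ 1, ∫_{−∞}^{∞} (x^(n)(t))² dt = (−1)^{n−1} B_{2n} = |B_{2n}|, where B_{2n} is the (2n)-th Bernoulli number. -/
open MeasureTheory

section LogisticAux
open Polynomial Finset Set


noncomputable def logP : ℕ → Polynomial ℚ
  | 0 => X
  | n+1 => (X - X^2) * derivative (logP n)

lemma logP_succ (n : ℕ) : logP (n+1) = (X - X^2) * derivative (logP n) := rfl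

lemma X_dvd_logP (n : ℕ) : (X : ℚ[X]) ∣ logP n := by
  cases n with
  | zero => simp [logP]
  | succ m => exact Dvd.dvd.mul_right ⟨1 - X, by ring⟩ _

lemma logP_eval_zero (n : ℕ) : (logP n).eval 0 = 0 := by
  obtain ⟨q, hq⟩ := X_dvd_logP n; simp [hq]

lemma logP_eval_one (n : ℕ) : (logP n).eval 1 = if n = 0 then 1 else 0 := by
  cases n with
  | zero => simp [logP]
  | succ m => simp [logP_succ]

noncomputable def panti (p : ℚ[X]) : ℚ[X] :=
  p.sum fun i a => C (a / (i+1)) * X^(i+1)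

lemma derivative_panti (p : ℚ[X]) : derivative (panti p) = p := by
  unfold panti Polynomial.sum
  rw [map_sum]
  conv_rhs => rw [← Polynomial.sum_C_mul_X_pow_eq p]
  unfold Polynomial.sum
  refine Finset.sum_congr rfl fun i _ => ?_
  rw [derivative_C_mul_X_pow, Nat.add_sub_cancel]
  congr 1
  rw [Nat.cast_add, Nat.cast_one, div_mul_cancel₀ _ (Nat.cast_add_one_ne_zero i)]

lemma panti_eval_zero (p : ℚ[X]) : (panti p).eval 0 = 0 := by
  unfold panti Polynomial.sum
  rw [eval_finset_sum]
  simp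

lemma panti_add (p q : ℚ[X]) : panti (p + q) = panti p + panti q := by
  unfold panti
  rw [Polynomial.sum_add_index] <;> simp [add_div, add_mul]
lemma starId : ∀ m : ℕ, (X:ℚ[X]) * ∑ k ∈ range m, C (m.choose k : ℚ) * logP k = X - logP m := by
  intro m
  induction m with
  | zero => simp [logP]
  | succ m IH =>
    set S := ∑ k ∈ range m, C (m.choose k : ℚ) * logP k with hS
    set T := ∑ k ∈ range m, C (m.choose k : ℚ) * derivative (logP k) with hT
    have hST : derivative S = T := by
      rw [hS, map_sum]
      exact Finset.sum_congr rfl fun k _ => derivative_C_mul _ _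
    have E0 : S + X * T = 1 - derivative (logP m) := by
      have h := congrArg derivative IH
      rwa [derivative_mul, derivative_X, one_mul, hST, map_sub, derivative_X] at h
    have E1 : (X:ℚ[X]) * ((X - X^2) * T) = (1 - X) * logP m - logP (m+1) := by
      rw [logP_succ]
      linear_combination ((X:ℚ[X]) - X^2) * E0 + ((X:ℚ[X]) - 1) * IH
    have hsum : ∑ k ∈ range (m+1), C (((m+1).choose k : ℚ)) * logP k
        = (X - X^2) * T + (S + logP m - X) + X := by
      rw [Finset.sum_range_succ']
      have h1 : ∀ k ∈ range m, C (((m+1).choose (k+1) : ℚ)) * logP (k+1)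
          = C ((m.choose k : ℚ)) * ((X - X^2) * derivative (logP k))
            + C ((m.choose (k+1) : ℚ)) * logP (k+1) := by
        intro k _
        rw [← logP_succ, Nat.choose_succ_succ]
        push_cast
        rw [map_add, add_mul]
      rw [Finset.sum_congr rfl h1, Finset.sum_add_distrib]
      have h2 : ∑ k ∈ range m, C ((m.choose k : ℚ)) * ((X - X^2) * derivative (logP k))
          = (X - X^2) * T := by
        rw [hT, Finset.mul_sum]
        exact Finset.sum_congr rfl fun k _ => by ring
      have h3 : ∑ k ∈ range m, C ((m.choose (k+1) : ℚ)) * logP (k+1)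
          = S + logP m - X := by
        have h4 := Finset.sum_range_succ' (fun k => C ((m.choose k : ℚ)) * logP k) m
        have h5 := Finset.sum_range_succ (fun k => C ((m.choose k : ℚ)) * logP k) m
        rw [h5] at h4
        simp only [Nat.choose_self, Nat.choose_zero_right, Nat.cast_one, map_one, one_mul] at h4
        have : logP 0 = X := rfl
        rw [this, ← hS] at h4
        linear_combination -h4
      rw [h2, h3]
      simp [logP]
    rw [hsum]
    linear_combination E1 + IH
lemma keylemma (m : ℕ) :
    (∑ i ∈ range m, (C (((i+1).factorial :ℚ))⁻¹ * X) * (C (((m-(i+1)).factorial:ℚ))⁻¹ * logP (m-(i+1))))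
      + C ((m.factorial:ℚ))⁻¹ * logP m = X * C ((m.factorial:ℚ))⁻¹ := by
  have hsum : (∑ i ∈ range m, (C (((i+1).factorial :ℚ))⁻¹ * X) * (C (((m-(i+1)).factorial:ℚ))⁻¹ * logP (m-(i+1))))
      = ∑ k ∈ range m, X * (C (m.choose k : ℚ) * C ((m.factorial:ℚ))⁻¹ * logP k) := by
    rw [← Finset.sum_range_reflect (fun k => X * (C (m.choose k : ℚ) * C ((m.factorial:ℚ))⁻¹ * logP k)) m]
    refine Finset.sum_congr rfl fun i hi => ?_
    rw [Finset.mem_range] at hi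
    have h1 : m - (i+1) = m - 1 - i := by omega
    have h2 : m - (m - 1 - i) = i + 1 := by omega
    have h3 : m - 1 - i ≤ m := by omega
    have h4 := Nat.choose_mul_factorial_mul_factorial h3
    rw [h2] at h4
    have h5 : (m.choose (m-1-i) : ℚ) * ((m.factorial : ℚ))⁻¹
        = (((i+1).factorial : ℚ))⁻¹ * ((((m-1-i).factorial) : ℚ))⁻¹ := by
      have h6 : ((m.choose (m-1-i) : ℚ)) * ((m-1-i).factorial : ℚ) * (((i+1).factorial : ℚ)) = (m.factorial : ℚ) := by
        exact_mod_cast congrArg (Nat.cast : ℕ → ℚ) h4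
      have f1 : ((m.factorial : ℚ)) ≠ 0 := Nat.cast_ne_zero.mpr (Nat.factorial_ne_zero m)
      have f2 : (((m-1-i).factorial : ℚ)) ≠ 0 := Nat.cast_ne_zero.mpr (Nat.factorial_ne_zero _)
      have f3 : (((i+1).factorial : ℚ)) ≠ 0 := Nat.cast_ne_zero.mpr (Nat.factorial_ne_zero _)
      field_simp
      linear_combination h6
    rw [h1]
    rw [← map_mul, h5, map_mul]
    ring
  rw [hsum]
  have h7 : ∑ k ∈ range m, X * (C (m.choose k : ℚ) * C ((m.factorial:ℚ))⁻¹ * logP k)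
      = C ((m.factorial:ℚ))⁻¹ * ((X:ℚ[X]) * ∑ k ∈ range m, C (m.choose k : ℚ) * logP k) := by
    rw [Finset.mul_sum, Finset.mul_sum]
    exact Finset.sum_congr rfl fun k _ => by ring
  rw [h7, starId m]
  ring
noncomputable def GG : PowerSeries ℚ[X] := PowerSeries.mk fun m => C ((m.factorial : ℚ))⁻¹ * logP m
noncomputable def Cu : PowerSeries ℚ[X] := PowerSeries.C X
noncomputable def EE : PowerSeries ℚ[X] := PowerSeries.exp ℚ[X]


lemma Gid : (1 + Cu * (EE - 1)) * GG = Cu * EE := by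
  refine PowerSeries.ext fun m => ?_
  rw [PowerSeries.coeff_mul]
  rw [Finset.Nat.sum_antidiagonal_eq_sum_range_succ_mk]
  have hterm : ∀ j, (PowerSeries.coeff j) (1 + Cu * (EE - 1))
      = if j = 0 then 1 else C ((j.factorial : ℚ)⁻¹) * X := by
    intro j
    rw [map_add]
    cases j with
    | zero =>
      simp [Cu, EE, PowerSeries.coeff_zero_eq_constantCoeff, PowerSeries.exp]
    | succ k =>
      simp only [Nat.succ_ne_zero, if_false]
      rw [PowerSeries.coeff_one, if_neg (Nat.succ_ne_zero k)]
      rw [Cu, PowerSeries.coeff_C_mul, map_sub, PowerSeries.coeff_one,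
        if_neg (Nat.succ_ne_zero k), sub_zero, EE, PowerSeries.coeff_exp]
      rw [Polynomial.algebraMap_eq]
      rw [zero_add, one_div]
      ring
  simp only [hterm]
  rw [Finset.sum_range_succ']
  simp only [Nat.succ_ne_zero, if_false, if_true, one_mul, Nat.sub_zero, GG, PowerSeries.coeff_mk]
  rw [Cu, PowerSeries.coeff_C_mul, EE, PowerSeries.coeff_exp, Polynomial.algebraMap_eq]
  rw [one_div]
  linear_combination keylemma m

noncomputable def Du (f : PowerSeries ℚ[X]) : PowerSeries ℚ[X] :=
  PowerSeries.mk fun n => derivative (PowerSeries.coeff n f)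

lemma coeff_Du (f : PowerSeries ℚ[X]) (n : ℕ) :
    PowerSeries.coeff n (Du f) = derivative (PowerSeries.coeff n f) := by
  simp [Du]

lemma Du_add (f g : PowerSeries ℚ[X]) : Du (f + g) = Du f + Du g := by
  refine PowerSeries.ext fun n => ?_
  simp [coeff_Du]

lemma Du_sub (f g : PowerSeries ℚ[X]) : Du (f - g) = Du f - Du g := by
  refine PowerSeries.ext fun n => ?_
  simp [coeff_Du]

lemma Du_mul (f g : PowerSeries ℚ[X]) : Du (f * g) = Du f * g + f * Du g := by
  refine PowerSeries.ext fun n => ?_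
  rw [coeff_Du, PowerSeries.coeff_mul, map_add, PowerSeries.coeff_mul, PowerSeries.coeff_mul,
    ← Finset.sum_add_distrib, map_sum]
  refine Finset.sum_congr rfl fun p _ => ?_
  rw [derivative_mul, coeff_Du, coeff_Du]

lemma Du_EE : Du EE = 0 := by
  refine PowerSeries.ext fun n => ?_
  rw [coeff_Du, EE, PowerSeries.coeff_exp, Polynomial.algebraMap_eq]
  simp

lemma Du_one : Du 1 = 0 := by
  refine PowerSeries.ext fun n => ?_
  rw [coeff_Du, PowerSeries.coeff_one]
  split <;> simp

lemma Du_Cu : Du Cu = 1 := by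
  refine PowerSeries.ext fun n => ?_
  rw [coeff_Du, Cu]
  cases n with
  | zero => simp
  | succ k => simp [PowerSeries.coeff_C, PowerSeries.coeff_one]

lemma zero_of (f : PowerSeries ℚ[X]) (h1 : Du f = 0)
    (h2 : PowerSeries.map (evalRingHom (0:ℚ)) f = 0) : f = 0 := by
  refine PowerSeries.ext fun n => ?_
  have d0 : derivative (PowerSeries.coeff n f) = 0 := by
    have := congrArg (PowerSeries.coeff n) h1
    rwa [coeff_Du, map_zero] at this
  have e0 : (PowerSeries.coeff n f).eval 0 = 0 := by
    have := congrArg (PowerSeries.coeff n) h2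
    rwa [PowerSeries.coeff_map, map_zero] at this
  have := eq_C_of_derivative_eq_zero d0
  rw [coeff_zero_eq_eval_zero, e0] at this
  simpa using this

noncomputable def LL : PowerSeries ℚ[X] :=
  PowerSeries.mk fun m => if m = 0 then 0 else C ((m.factorial : ℚ))⁻¹ * logP (m-1)
noncomputable def AA : PowerSeries ℚ[X] :=
  PowerSeries.mk fun m => C ((m.factorial : ℚ))⁻¹ * panti (logP m)

lemma Du_AA : Du AA = GG := by
  refine PowerSeries.ext fun n => ?_
  rw [coeff_Du, AA, PowerSeries.coeff_mk, derivative_C_mul, derivative_panti, GG,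
    PowerSeries.coeff_mk]

lemma hCx : (PowerSeries.C (R := ℚ[X])) (X - X^2) = Cu - Cu^2 := by
  rw [map_sub, map_pow, Cu]

lemma hL : (PowerSeries.C (R := ℚ[X])) (X - X^2) * Du LL = GG - Cu := by
  refine PowerSeries.ext fun n => ?_
  rw [PowerSeries.coeff_C_mul, coeff_Du, LL, PowerSeries.coeff_mk, map_sub, GG,
    PowerSeries.coeff_mk]
  cases n with
  | zero =>
    simp [Cu, logP, PowerSeries.coeff_C]
  | succ k =>
    rw [if_neg (Nat.succ_ne_zero k), derivative_C_mul, Nat.add_sub_cancel]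
    have : (PowerSeries.coeff (k+1)) Cu = 0 := by
      simp [Cu, PowerSeries.coeff_C]
    rw [this, sub_zero]
    show (X - X^2) * (C ((((k+1).factorial : ℚ)))⁻¹ * derivative (logP k)) = _
    have : logP (k+1) = (X - X^2) * derivative (logP k) := rfl
    rw [this]
    ring

lemma diamond : (PowerSeries.C (R := ℚ[X])) (X - X^2) * ((EE-1)^2 * GG)
    = (PowerSeries.C (R := ℚ[X])) (X - X^2) * (EE*(EE-1)) - EE * (GG - Cu) := by
  rw [hCx]
  linear_combination (EE - Cu * (EE - 1)) * Gid

lemma claimT : (EE-1)^2 * GG = EE*(EE-1) - EE * Du LL := by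
  have hne : (PowerSeries.C (R := ℚ[X])) (X - X^2) ≠ 0 := by
    intro h
    have := congrArg (PowerSeries.coeff 0) h
    simp only [PowerSeries.coeff_zero_eq_constantCoeff, map_zero] at this
    rw [PowerSeries.constantCoeff_C] at this
    have h2 := congrArg (fun p => Polynomial.coeff p 1) this
    simp at h2
  apply mul_left_cancel₀ hne
  rw [diamond]
  linear_combination EE * hL

lemma TT : (EE-1)^2 * AA = Cu * (EE*(EE-1)) - EE * LL := by
  have hz : Du ((EE-1)^2 * AA - (Cu * (EE*(EE-1)) - EE * LL)) = 0 := by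
    rw [Du_sub, Du_sub, Du_mul, Du_mul, Du_mul, Du_mul, Du_sub, Du_EE, Du_one, Du_Cu, Du_AA]
    have hDuLL : Du ((EE-1)^2) = 0 := by
      rw [pow_two, Du_mul, Du_sub, Du_EE, Du_one]
      simp
    rw [hDuLL]
    have := claimT
    ring_nf
    ring_nf at this
    linear_combination this
  have he : PowerSeries.map (evalRingHom (0:ℚ)) ((EE-1)^2 * AA - (Cu * (EE*(EE-1)) - EE * LL)) = 0 := by
    simp only [map_sub, map_mul]
    have hAA : PowerSeries.map (evalRingHom (0:ℚ)) AA = 0 := by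
      refine PowerSeries.ext fun n => ?_
      rw [PowerSeries.coeff_map, AA, PowerSeries.coeff_mk]
      simp [panti_eval_zero]
    have hLL : PowerSeries.map (evalRingHom (0:ℚ)) LL = 0 := by
      refine PowerSeries.ext fun n => ?_
      rw [PowerSeries.coeff_map, LL, PowerSeries.coeff_mk]
      cases n with
      | zero => simp
      | succ k => simp [logP_eval_zero]
    have hCu : PowerSeries.map (evalRingHom (0:ℚ)) Cu = 0 := by
      refine PowerSeries.ext fun n => ?_
      rw [PowerSeries.coeff_map, Cu]
      simp [PowerSeries.coeff_C]
      split <;> simp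
    rw [hAA, hLL, hCu]
    ring
  have := zero_of _ hz he
  linear_combination this

noncomputable def VV : PowerSeries ℚ :=
  PowerSeries.mk fun m => ((m.factorial : ℚ))⁻¹ * ((panti (logP m)).eval 1)

lemma ev1_EE : PowerSeries.map (evalRingHom (1:ℚ)) EE = PowerSeries.exp ℚ := by
  refine PowerSeries.ext fun n => ?_
  rw [PowerSeries.coeff_map, EE, PowerSeries.coeff_exp, PowerSeries.coeff_exp,
    Polynomial.algebraMap_eq]
  simp

lemma ev1_Cu : PowerSeries.map (evalRingHom (1:ℚ)) Cu = 1 := by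
  refine PowerSeries.ext fun n => ?_
  rw [PowerSeries.coeff_map, Cu]
  cases n with
  | zero => simp
  | succ k => simp [PowerSeries.coeff_C, PowerSeries.coeff_one]

lemma ev1_AA : PowerSeries.map (evalRingHom (1:ℚ)) AA = VV := by
  refine PowerSeries.ext fun n => ?_
  rw [PowerSeries.coeff_map, AA, PowerSeries.coeff_mk, VV, PowerSeries.coeff_mk]
  simp

lemma ev1_LL : PowerSeries.map (evalRingHom (1:ℚ)) LL = PowerSeries.X := by
  refine PowerSeries.ext fun n => ?_
  rw [PowerSeries.coeff_map, LL, PowerSeries.coeff_mk, PowerSeries.coeff_X]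
  match n with
  | 0 => simp
  | 1 => simp [logP_eval_one, logP]
  | (k+2) => simp [logP_eval_one]

lemma VId : (PowerSeries.exp ℚ - 1)^2 * VV
    = PowerSeries.exp ℚ * (PowerSeries.exp ℚ - 1) - PowerSeries.exp ℚ * PowerSeries.X := by
  have h := congrArg (PowerSeries.map (evalRingHom (1:ℚ))) TT
  simp only [map_sub, map_mul, map_pow, map_one, ev1_EE, ev1_Cu, ev1_AA, ev1_LL] at h
  linear_combination h

noncomputable def WW : PowerSeries ℚ :=
  PowerSeries.mk fun m => bernoulli' (m+1) / (m.factorial : ℚ)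

open PowerSeries in
lemma derivExp : (d⁄dX ℚ) (PowerSeries.exp ℚ) = PowerSeries.exp ℚ := by
  refine PowerSeries.ext fun n => ?_
  rw [PowerSeries.coeff_derivative, PowerSeries.coeff_exp, PowerSeries.coeff_exp]
  simp only [Algebra.algebraMap_self, map_div₀, map_one, RingHom.id_apply, map_natCast]
  rw [Nat.factorial_succ]
  have h1 : ((n.factorial : ℚ)) ≠ 0 := Nat.cast_ne_zero.mpr (Nat.factorial_ne_zero n)
  have h2 : ((n:ℚ)+1) ≠ 0 := by positivity
  field_simp
  push_cast
  ring

open PowerSeries in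
lemma WW_eq : WW = (d⁄dX ℚ) (bernoulli'PowerSeries ℚ) := by
  refine PowerSeries.ext fun n => ?_
  rw [WW, PowerSeries.coeff_mk, PowerSeries.coeff_derivative, bernoulli'PowerSeries,
    PowerSeries.coeff_mk]
  rw [Nat.factorial_succ]
  have h1 : ((n.factorial : ℚ)) ≠ 0 := Nat.cast_ne_zero.mpr (Nat.factorial_ne_zero n)
  have h2 : ((n:ℚ)+1) ≠ 0 := by positivity
  push_cast
  field_simp
  simp

open PowerSeries in
lemma WId : (PowerSeries.exp ℚ - 1)^2 * WW
    = PowerSeries.exp ℚ * (PowerSeries.exp ℚ - 1) - PowerSeries.exp ℚ * PowerSeries.X := by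
  have horig := bernoulli'PowerSeries_mul_exp_sub_one ℚ
  have hD := congrArg (d⁄dX ℚ) horig
  rw [Derivation.leibniz, Derivation.leibniz, map_sub, Derivation.map_one_eq_zero, derivExp,
    PowerSeries.derivative_X] at hD
  rw [WW_eq]
  simp only [smul_eq_mul] at hD
  linear_combination (PowerSeries.exp ℚ - 1) * hD - PowerSeries.exp ℚ * horig

lemma VV_eq_WW : VV = WW := by
  have hne : (PowerSeries.exp ℚ - 1)^2 ≠ 0 := by
    apply pow_ne_zero
    intro h
    have := congrArg (PowerSeries.coeff 1) h
    rw [map_sub, PowerSeries.coeff_exp, PowerSeries.coeff_one] at this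
    simp [Nat.factorial] at this
  apply mul_left_cancel₀ hne
  rw [VId, WId]

lemma Iq_logP (m : ℕ) : (panti (logP m)).eval 1 = bernoulli' (m+1) := by
  have := congrArg (PowerSeries.coeff m) VV_eq_WW
  rw [VV, WW, PowerSeries.coeff_mk, PowerSeries.coeff_mk] at this
  have h1 : ((m.factorial : ℚ)) ≠ 0 := Nat.cast_ne_zero.mpr (Nat.factorial_ne_zero m)
  field_simp at this
  exact this
noncomputable def Iq (p : ℚ[X]) : ℚ := (panti p).eval 1

lemma Iq_add (p q : ℚ[X]) : Iq (p + q) = Iq p + Iq q := by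
  unfold Iq; rw [panti_add, eval_add]

lemma panti_derivative (r : ℚ[X]) : panti (derivative r) = r - C (r.eval 0) := by
  have h : derivative (panti (derivative r) - r) = 0 := by
    rw [map_sub, derivative_panti, sub_self]
  have h2 := eq_C_of_derivative_eq_zero h
  rw [coeff_zero_eq_eval_zero] at h2
  have h3 : (panti (derivative r) - r).eval 0 = - r.eval 0 := by
    rw [eval_sub, panti_eval_zero, zero_sub]
  rw [h3] at h2
  have := sub_eq_iff_eq_add.mp h2
  rw [this, map_neg]; ring

lemma Iq_derivative (r : ℚ[X]) : Iq (derivative r) = r.eval 1 - r.eval 0 := by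
  unfold Iq; rw [panti_derivative]; simp

lemma Iq_ibp (a b : ℕ) (hb : 1 ≤ b) :
    Iq (logP a * derivative (logP b)) = - Iq (logP (a+1) * derivative (logP (b-1))) := by
  obtain ⟨c, rfl⟩ := Nat.exists_eq_add_of_le hb
  have key : Iq (logP a * derivative (logP (1+c))) + Iq (logP (1+c) * derivative (logP a)) = 0 := by
    rw [← Iq_add]
    have : logP a * derivative (logP (1+c)) + logP (1+c) * derivative (logP a)
        = derivative (logP a * logP (1+c)) := by rw [derivative_mul]; ring
    rw [this, Iq_derivative]
    simp [eval_mul, logP_eval_one, logP_eval_zero]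
  have h2 : logP (1+c) * derivative (logP a) = logP (a+1) * derivative (logP (1+c-1)) := by
    have : (1:ℕ)+c = c+1 := by omega
    rw [this]
    show logP (c+1) * derivative (logP a) = logP (a+1) * derivative (logP c)
    rw [logP_succ, logP_succ]; ring
  rw [h2] at key; linarith

lemma Iq_chain (b a : ℕ) :
    Iq (logP a * derivative (logP b)) = (-1)^b * Iq (logP (a+b) * derivative (logP 0)) := by
  induction b generalizing a with
  | zero => simp
  | succ c ih =>
    rw [Iq_ibp a (c+1) (by omega)]
    simp only [Nat.add_sub_cancel]
    rw [ih (a+1)]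
    rw [show a+1+c = a+(c+1) by omega]
    ring
noncomputable def sig (t : ℝ) : ℝ := (1 + Real.exp (-t))⁻¹

lemma sig_pos (t : ℝ) : 0 < sig t := by
  unfold sig; positivity

lemma sig_lt_one (t : ℝ) : sig t < 1 := by
  unfold sig
  rw [inv_lt_one_iff₀]
  right
  nlinarith [Real.exp_pos (-t)]

lemma one_add_exp_ne (t : ℝ) : 1 + Real.exp (-t) ≠ 0 := by positivity

lemma hasDerivAt_sig (t : ℝ) : HasDerivAt sig (sig t * (1 - sig t)) t := by
  have h1 : HasDerivAt (fun s : ℝ => -s) (-1) t := (hasDerivAt_id t).neg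
  have h2 : HasDerivAt (fun s : ℝ => Real.exp (-s)) (Real.exp (-t) * (-1)) t :=
    (Real.hasDerivAt_exp (-t)).comp t h1
  have h3 : HasDerivAt (fun s : ℝ => 1 + Real.exp (-s)) (Real.exp (-t) * (-1)) t :=
    h2.const_add 1
  have h4 := h3.inv (one_add_exp_ne t)
  refine h4.congr_deriv ?_
  unfold sig
  have h5 := one_add_exp_ne t
  field_simp
  ring

lemma sig_one_minus (t : ℝ) : sig t * (1 - sig t) = Real.exp (-t) / (1 + Real.exp (-t))^2 := by
  unfold sig
  have h5 := one_add_exp_ne t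
  field_simp
  ring

lemma sig_mul_le (t : ℝ) : sig t * (1 - sig t) ≤ Real.exp (-|t|) := by
  rw [sig_one_minus]
  rcases le_or_gt 0 t with h | h
  · rw [abs_of_nonneg h]
    rw [div_le_iff₀ (by positivity)]
    nlinarith [Real.exp_pos (-t), mul_pos (Real.exp_pos (-t)) (Real.exp_pos (-t)),
      mul_pos (mul_pos (Real.exp_pos (-t)) (Real.exp_pos (-t))) (Real.exp_pos (-t))]
  · rw [abs_of_neg h]
    have he : Real.exp (-t) > 0 := Real.exp_pos _
    rw [div_le_iff₀ (by positivity)]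
    rw [neg_neg]
    have : Real.exp t * Real.exp (-t) = 1 := by
      rw [← Real.exp_add]; simp
    nlinarith [Real.exp_pos (-t)]

lemma integrable_exp_neg_abs' : Integrable (fun t : ℝ => Real.exp (-|t|)) := by
  have h1 : IntegrableOn (fun t : ℝ => Real.exp (-|t|)) (Iic 0) := by
    apply (integrableOn_exp_Iic 0).congr_fun ?_ measurableSet_Iic
    intro t ht
    simp only [Set.mem_Iic] at ht
    show Real.exp t = Real.exp (-|t|)
    rw [abs_of_nonpos ht, neg_neg]
  have h2 : IntegrableOn (fun t : ℝ => Real.exp (-|t|)) (Ioi 0) := by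
    have h3 := exp_neg_integrableOn_Ioi 0 (one_pos)
    apply h3.congr_fun ?_ measurableSet_Ioi
    intro t ht
    simp only [Set.mem_Ioi] at ht
    show Real.exp (-1*t) = Real.exp (-|t|)
    rw [abs_of_pos ht, neg_one_mul]
  have := h1.union h2
  rwa [Iic_union_Ioi, integrableOn_univ] at this

lemma iter_deriv (n : ℕ) :
    iteratedDeriv n sig = fun t => ((logP n).map (algebraMap ℚ ℝ)).eval (sig t) := by
  induction n with
  | zero =>
    funext t
    simp [iteratedDeriv_zero, logP]
  | succ m ih =>
    funext t
    rw [iteratedDeriv_succ, ih]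
    have hd : HasDerivAt (fun s => ((logP m).map (algebraMap ℚ ℝ)).eval (sig s))
        ((derivative ((logP m).map (algebraMap ℚ ℝ))).eval (sig t) * (sig t * (1 - sig t))) t :=
      (Polynomial.hasDerivAt _ (sig t)).comp t (hasDerivAt_sig t)
    rw [hd.deriv]
    rw [logP_succ, Polynomial.map_mul, eval_mul, ← Polynomial.derivative_map]
    simp only [Polynomial.map_sub, Polynomial.map_pow, Polynomial.map_X, eval_sub, eval_pow,
      eval_X]
    ring

lemma continuous_sig : Continuous sig :=
  (continuous_const.add (Real.continuous_exp.comp continuous_neg)).inv₀ one_add_exp_ne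

lemma tendsto_sig_top : Filter.Tendsto sig Filter.atTop (nhds 1) := by
  have h1 : Filter.Tendsto (fun t : ℝ => Real.exp (-t)) Filter.atTop (nhds 0) :=
    Real.tendsto_exp_atBot.comp Filter.tendsto_neg_atTop_atBot
  have h2 : Filter.Tendsto (fun t : ℝ => 1 + Real.exp (-t)) Filter.atTop (nhds 1) := by
    simpa using h1.const_add 1
  have h3 := h2.inv₀ one_ne_zero
  rw [inv_one] at h3
  exact h3

lemma tendsto_sig_bot : Filter.Tendsto sig Filter.atBot (nhds 0) := by
  have h1 : Filter.Tendsto (fun t : ℝ => Real.exp (-t)) Filter.atBot Filter.atTop :=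
    Real.tendsto_exp_atTop.comp Filter.tendsto_neg_atBot_atTop
  have h2 : Filter.Tendsto (fun t : ℝ => 1 + Real.exp (-t)) Filter.atBot Filter.atTop :=
    Filter.tendsto_atTop_add_const_left _ 1 h1
  exact h2.inv_tendsto_atTop

lemma integral_eval (m : ℕ) :
    ∫ t : ℝ, (((logP (m+1)).map (algebraMap ℚ ℝ)).eval (sig t))^2
      = algebraMap ℚ ℝ ((panti (logP (m+1) * derivative (logP m))).eval 1) := by
  set Q : ℚ[X] := logP (m+1) * derivative (logP m) with hQ
  set AR : ℝ[X] := (panti Q).map (algebraMap ℚ ℝ) with hAR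
  set F : ℝ → ℝ := fun t => AR.eval (sig t) with hF
  set g : ℝ → ℝ := fun t => (((logP (m+1)).map (algebraMap ℚ ℝ)).eval (sig t))^2 with hg
  have polyid : (X - X^2) * Q = (logP (m+1))^2 := by
    have h : logP (m+1) = (X - X^2) * derivative (logP m) := rfl
    rw [hQ, h]; ring
  have hFg : ∀ t, HasDerivAt F (g t) t := by
    intro t
    have hd : HasDerivAt F ((derivative AR).eval (sig t) * (sig t * (1 - sig t))) t :=
      (Polynomial.hasDerivAt AR (sig t)).comp t (hasDerivAt_sig t)
    convert hd using 1
    rw [hAR, Polynomial.derivative_map, derivative_panti]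
    have h2 := congrArg (fun p : ℚ[X] => (p.map (algebraMap ℚ ℝ)).eval (sig t)) polyid
    simp only [Polynomial.map_mul, Polynomial.map_sub, Polynomial.map_pow, Polynomial.map_X,
      eval_mul, eval_sub, eval_pow, eval_X] at h2
    rw [hg]
    linear_combination -h2
  have hQR : ∀ t, ((logP (m+1)).map (algebraMap ℚ ℝ)).eval (sig t)
      = (sig t - sig t^2) * ((derivative (logP m)).map (algebraMap ℚ ℝ)).eval (sig t) := by
    intro t
    have h : logP (m+1) = (X - X^2) * derivative (logP m) := rfl
    rw [h]
    simp only [Polynomial.map_mul, Polynomial.map_sub, Polynomial.map_pow, Polynomial.map_X,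
      eval_mul, eval_sub, eval_pow, eval_X]
  obtain ⟨Cb, hCb⟩ := (isCompact_Icc (a := (0:ℝ)) (b := 1)).exists_bound_of_continuousOn
    (Continuous.continuousOn (Polynomial.continuous ((derivative (logP m)).map (algebraMap ℚ ℝ))))
  have hgint : Integrable g := by
    have hmeas : MeasureTheory.AEStronglyMeasurable g := by
      apply Continuous.aestronglyMeasurable
      exact ((Polynomial.continuous _).comp continuous_sig).pow 2
    apply MeasureTheory.Integrable.mono' ((integrable_exp_neg_abs').const_mul (Cb^2)) hmeas
    refine Filter.Eventually.of_forall fun t => ?_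
    have h0 : (0:ℝ) < sig t := sig_pos t
    have h1 : sig t < 1 := sig_lt_one t
    have hmem : sig t ∈ Icc (0:ℝ) 1 := ⟨le_of_lt h0, le_of_lt h1⟩
    have hb := hCb (sig t) hmem
    rw [Real.norm_eq_abs] at hb ⊢
    have hCb0 : 0 ≤ Cb := le_trans (abs_nonneg _) hb
    rw [hg]
    have hs : sig t - sig t^2 = sig t * (1 - sig t) := by ring
    rw [abs_pow, hQR t, abs_mul]
    have e1 : |sig t - sig t^2| ≤ 1 := by
      rw [abs_of_nonneg (by nlinarith)]
      nlinarith
    have e2 : |sig t - sig t^2| ≤ Real.exp (-|t|) := by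
      rw [abs_of_nonneg (by nlinarith), hs]
      exact sig_mul_le t
    have e3 : 0 ≤ |sig t - sig t^2| := abs_nonneg _
    calc (|sig t - sig t^2| * |((derivative (logP m)).map (algebraMap ℚ ℝ)).eval (sig t)|)^2
        ≤ (|sig t - sig t^2| * Cb)^2 := by
          apply pow_le_pow_left₀ (by positivity)
          exact mul_le_mul_of_nonneg_left hb e3
      _ = |sig t - sig t^2|^2 * Cb^2 := by ring
      _ ≤ (1 * Real.exp (-|t|)) * Cb^2 := by
          apply mul_le_mul_of_nonneg_right ?_ (by positivity)
          calc |sig t - sig t^2|^2 = |sig t - sig t^2| * |sig t - sig t ^2| := pow_two _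
            _ ≤ 1 * Real.exp (-|t|) := mul_le_mul e1 e2 e3 zero_le_one
      _ = Cb^2 * Real.exp (-|t|) := by ring
  have htop : Filter.Tendsto F Filter.atTop (nhds (AR.eval 1)) :=
    ((Polynomial.continuous AR).tendsto 1).comp tendsto_sig_top
  have hbot : Filter.Tendsto F Filter.atBot (nhds (AR.eval 0)) :=
    ((Polynomial.continuous AR).tendsto 0).comp tendsto_sig_bot
  have hIoi : ∫ t in Ioi (0:ℝ), g t = AR.eval 1 - F 0 :=
    MeasureTheory.integral_Ioi_of_hasDerivAt_of_tendsto' (fun x _ => hFg x)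
      hgint.integrableOn htop
  have hIic : ∫ t in Iic (0:ℝ), g t = F 0 - AR.eval 0 :=
    MeasureTheory.integral_Iic_of_hasDerivAt_of_tendsto' (fun x _ => hFg x)
      hgint.integrableOn hbot
  have hsplit := intervalIntegral.integral_Iic_add_Ioi (b := (0:ℝ))
    hgint.integrableOn hgint.integrableOn
  have hall : ∫ t : ℝ, g t = AR.eval 1 - AR.eval 0 := by
    rw [← hsplit, hIoi, hIic]; ring
  rw [hall, hAR, Polynomial.eval_one_map, Polynomial.eval_zero_map, panti_eval_zero]
  simp

end LogisticAux

open Polynomial in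
lemma Iq_final (m : ℕ) :
    (panti (logP (m+1) * derivative (logP m))).eval 1 = (-1:ℚ)^m * _root_.bernoulli (2*(m+1)) := by
  have h1 := Iq_chain m (m+1)
  have h2 : m + 1 + m = 2*m+1 := by omega
  rw [h2] at h1
  have h3 : logP (2*m+1) * derivative (logP 0) = logP (2*m+1) := by
    show logP (2*m+1) * derivative X = logP (2*m+1)
    rw [derivative_X, mul_one]
  rw [h3] at h1
  have h4 : Iq (logP (2*m+1)) = bernoulli' (2*m+1+1) := Iq_logP (2*m+1)
  have h5 : (2*m+1+1) = 2*(m+1) := by omega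
  rw [h5] at h4
  have h6 : bernoulli' (2*(m+1)) = _root_.bernoulli (2*(m+1)) :=
    (bernoulli_eq_bernoulli'_of_ne_one (by omega)).symm
  show Iq (logP (m+1) * derivative (logP m)) = _
  rw [h1, h4, h6]

/-- For the standard logistic function x(t) = 1/(1 + e^{−t}) and every
n ≥ 1, ∫ (x⁽ⁿ⁾(t))² dt = (−1)^{n−1} B_{2n} = |B_{2n}|. -/
theorem integral_sq_iterated_deriv_logistic
    (x : ℝ → ℝ) (hx : ∀ t, x t = 1 / (1 + Real.exp (-t))) :
    ∀ n : ℕ, 1 ≤ n →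
      (∫ t : ℝ, (iteratedDeriv n x t) ^ 2) = (-1 : ℝ) ^ (n - 1) * (bernoulli (2 * n) : ℝ) ∧
      (∫ t : ℝ, (iteratedDeriv n x t) ^ 2) = |(bernoulli (2 * n) : ℝ)| := by
  have hxs : x = sig := funext fun t => by rw [hx t, sig, one_div]
  intro n hn
  obtain ⟨m, rfl⟩ : ∃ m, n = m + 1 := ⟨n-1, by omega⟩
  have hfun : (fun t : ℝ => (iteratedDeriv (m+1) x t)^2)
      = fun t => (((logP (m+1)).map (algebraMap ℚ ℝ)).eval (sig t))^2 := by
    funext t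
    rw [hxs, iter_deriv (m+1)]
  have hInt : (∫ t : ℝ, (iteratedDeriv (m+1) x t)^2)
      = algebraMap ℚ ℝ ((panti (logP (m+1) * Polynomial.derivative (logP m))).eval 1) := by
    rw [show (∫ t : ℝ, (iteratedDeriv (m+1) x t)^2)
        = ∫ t : ℝ, (((logP (m+1)).map (algebraMap ℚ ℝ)).eval (sig t))^2 from by rw [← hfun]]
    exact integral_eval m
  have hval : (∫ t : ℝ, (iteratedDeriv (m+1) x t)^2)
      = (-1:ℝ)^m * (_root_.bernoulli (2*(m+1)) : ℝ) := by
    rw [hInt, Iq_final m, eq_ratCast]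
    push_cast
    ring
  have hm : m + 1 - 1 = m := by omega
  refine ⟨by rw [hval, hm], ?_⟩
  have hnn : 0 ≤ ∫ t : ℝ, (iteratedDeriv (m+1) x t)^2 :=
    integral_nonneg fun t => sq_nonneg _
  have habs : |(_root_.bernoulli (2*(m+1)) : ℝ)| = |(-1:ℝ)^m * (_root_.bernoulli (2*(m+1)) : ℝ)| := by
    rw [abs_mul, abs_pow, abs_neg, abs_one, one_pow, one_mul]
  rw [habs, ← hval, abs_of_nonneg hnn]
end

section
/- Let x(t) = 1/(1 + e^{−t}) be the standard logistic function and, for an integer n ≥ 2, define the logistic mother wavelet ψ_n(t) = x^(n)(t)/√|B_{2n}|, where B_{2n} is the (2n)-th Bernoulli number. Then ψ_n belongs to L²(ℝ) and its L² norm equals 1, i.e. ∫_{−∞}^{∞} ψ_n(t)² dt = 1. -/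
open MeasureTheory

open Finset

/-- `St m k = k! * S(m,k)` where `S` is the Stirling number of the second kind. -/
def St : ℕ → ℕ → ℚ
  | 0, 0 => 1
  | 0, _ + 1 => 0
  | _ + 1, 0 => 0
  | m + 1, k + 1 => (k + 1) * (St m (k + 1) + St m k)

@[simp] lemma St_zero_zero : St 0 0 = 1 := rfl
@[simp] lemma St_zero_succ (k : ℕ) : St 0 (k + 1) = 0 := rfl
@[simp] lemma St_succ_zero (m : ℕ) : St (m + 1) 0 = 0 := rfl
lemma St_succ_succ (m k : ℕ) : St (m + 1) (k + 1) = (k + 1) * (St m (k + 1) + St m k) := rfl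

lemma St_eq_zero_of_lt : ∀ {m k : ℕ}, m < k → St m k = 0 := by
  intro m
  induction m with
  | zero => intro k hk; match k, hk with
    | k + 1, _ => simp
  | succ m ih =>
    intro k hk
    match k, hk with
    | k + 1, hk =>
      rw [St_succ_succ, ih (by omega), ih (by omega)]
      ring

lemma St_diag : ∀ m : ℕ, St m m = Nat.factorial m := by
  intro m
  induction m with
  | zero => simp
  | succ m ih =>
    rw [St_succ_succ, St_eq_zero_of_lt (Nat.lt_succ_self m), ih]
    push_cast [Nat.factorial_succ]
    ring

/-- Alternating sum of `St m ·`. -/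
def Ast (m : ℕ) : ℚ := ∑ k ∈ range (m + 1), (-1) ^ k * St m k

def Lst (m : ℕ) : ℚ := ∑ k ∈ range (m + 1), (-1) ^ (k + 1) * St m k / k

def βst (m : ℕ) : ℚ := ∑ k ∈ range (m + 1), (-1) ^ k * St m k / (k + 1)

lemma sum_St_ext {m : ℕ} {g : ℕ → ℚ → ℚ} (hg : ∀ k, g k 0 = 0) {N : ℕ} (hN : m + 1 ≤ N) :
    ∑ k ∈ range (m + 1), g k (St m k) = ∑ k ∈ range N, g k (St m k) := by
  refine Finset.sum_subset (Finset.range_subset_range.mpr hN) ?_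
  intro k hk' hk
  rw [St_eq_zero_of_lt (by simp only [Finset.mem_range, not_lt] at hk; omega), hg]

lemma Lst_eq (m : ℕ) : Lst m = if m = 1 then 1 else 0 := by
  match m with
  | 0 => simp [Lst]
  | m + 1 =>
    have h1 : Lst (m + 1) = ∑ k ∈ range (m + 1),
        ((-1) ^ k * St m (k + 1) + (-1) ^ k * St m k) := by
      rw [Lst, Finset.sum_range_succ']
      simp only [St_succ_zero, mul_zero, zero_div, add_zero]
      refine Finset.sum_congr rfl fun k _ => ?_
      rw [St_succ_succ]
      have hk : ((k : ℚ) + 1) ≠ 0 := by positivity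
      push_cast
      field_simp
      ring
    have h2 : ∑ k ∈ range (m + 1), ((-1) ^ k : ℚ) * St m (k + 1)
        = St m 0 - Ast m := by
      have hA : Ast m = ∑ k ∈ range m, (-1) ^ (k + 1) * St m (k + 1) + (-1) ^ 0 * St m 0 := by
        rw [Ast, Finset.sum_range_succ']
      have htop : ∑ k ∈ range (m + 1), ((-1) ^ k : ℚ) * St m (k + 1)
          = ∑ k ∈ range m, ((-1) ^ k : ℚ) * St m (k + 1) := by
        rw [Finset.sum_range_succ, St_eq_zero_of_lt (Nat.lt_succ_self m), mul_zero, add_zero]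
      have hneg : ∑ k ∈ range m, ((-1) ^ (k+1) : ℚ) * St m (k + 1)
          = - ∑ k ∈ range m, ((-1) ^ k : ℚ) * St m (k + 1) := by
        rw [← Finset.sum_neg_distrib]
        exact Finset.sum_congr rfl fun k _ => by ring
      rw [htop, hA, hneg]
      ring
    have h3 : ∑ k ∈ range (m + 1), ((-1) ^ k : ℚ) * St m k = Ast m := rfl
    rw [h1, Finset.sum_add_distrib, h2, h3]
    have h0 : St m 0 = if m = 0 then 1 else 0 := by
      match m with
      | 0 => rfl
      | m + 1 => simp
    rw [h0]
    by_cases hm : m = 0 <;> simp [hm]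

lemma St_one (m : ℕ) : St m 1 = if m = 0 then 0 else 1 := by
  induction m with
  | zero => simp [St_eq_zero_of_lt]
  | succ m ih =>
    rw [show (1:ℕ) = 0 + 1 from rfl, St_succ_succ, ih]
    have h0 : St m 0 = if m = 0 then 1 else 0 := by
      match m with
      | 0 => rfl
      | m + 1 => simp
    rw [h0]
    by_cases hm : m = 0 <;> simp [hm]

/-- Key binomial identity: `St (m+1) (k+1) = (k+1) * ∑ C(m,i) * St i k`. -/
lemma Kst : ∀ m k : ℕ, St (m + 1) (k + 1)
    = (k + 1) * ∑ i ∈ range (m + 1), (m.choose i : ℚ) * St i k := by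
  intro m
  induction m with
  | zero =>
    intro k
    rw [St_succ_succ, St_zero_succ]
    simp
  | succ m ih =>
    intro k
    -- rewrite RHS sum using Pascal
    have hsplit : ∑ i ∈ range (m + 2), ((m+1).choose i : ℚ) * St i k
        = ∑ i ∈ range (m + 1), (m.choose i : ℚ) * St (i+1) k
          + ∑ i ∈ range (m + 1), (m.choose i : ℚ) * St i k := by
      rw [Finset.sum_range_succ']
      have h1 : ∀ i ∈ range (m + 1), ((m+1).choose (i+1) : ℚ) * St (i+1) k
          = (m.choose i : ℚ) * St (i+1) k + (m.choose (i+1) : ℚ) * St (i+1) k := by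
        intro i _
        rw [Nat.choose_succ_succ]
        push_cast
        ring
      rw [Finset.sum_congr rfl h1, Finset.sum_add_distrib]
      have h2 : ∑ i ∈ range (m + 1), (m.choose (i+1) : ℚ) * St (i+1) k
            + ((m+1).choose 0 : ℚ) * St 0 k
          = ∑ i ∈ range (m + 1), (m.choose i : ℚ) * St i k := by
        have : ∑ i ∈ range (m + 2), (m.choose i : ℚ) * St i k
            = ∑ i ∈ range (m + 1), (m.choose (i+1) : ℚ) * St (i+1) k
              + (m.choose 0 : ℚ) * St 0 k := Finset.sum_range_succ'
              (fun i => (m.choose i : ℚ) * St i k) (m+1)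
        rw [show ((m+1).choose 0 : ℚ) = (m.choose 0 : ℚ) by norm_num, ← this,
          Finset.sum_range_succ, Nat.choose_succ_self]
        norm_num
      rw [add_assoc, h2]
    match k with
    | 0 =>
      have hz : ∀ i ∈ range (m+1), (m.choose i : ℚ) * St (i+1) 0 = 0 := by
        intro i _; rw [St_succ_zero, mul_zero]
      rw [hsplit, Finset.sum_eq_zero hz]
      have h1 : St (m + 2) (0 + 1) = 1 := by rw [St_one]; simp
      have h2 : St (m + 1) (0 + 1) = 1 := by rw [St_one]; simp
      have h3 := ih 0
      rw [h2] at h3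
      rw [h1]
      push_cast at h3 ⊢
      linarith
    | k + 1 =>
      have hSa := ih (k + 1)
      have hSb := ih k
      set Sa := ∑ i ∈ range (m + 1), (m.choose i : ℚ) * St i (k+1) with hSadef
      set Sb := ∑ i ∈ range (m + 1), (m.choose i : ℚ) * St i k with hSbdef
      have hrec : ∑ i ∈ range (m + 1), (m.choose i : ℚ) * St (i+1) (k+1)
          = ((k:ℚ)+1) * Sa + ((k:ℚ)+1) * Sb := by
        have e1 : ∀ i ∈ range (m+1), (m.choose i : ℚ) * St (i+1) (k+1)
            = ((k:ℚ)+1) * ((m.choose i : ℚ) * St i (k+1))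
              + ((k:ℚ)+1) * ((m.choose i : ℚ) * St i k) := by
          intro i _
          rw [St_succ_succ]
          push_cast
          ring
        rw [Finset.sum_congr rfl e1, Finset.sum_add_distrib, ← Finset.mul_sum,
          ← Finset.mul_sum]
      rw [hsplit, hrec, St_succ_succ, hSa, hSb]
      push_cast
      ring

lemma Rst (m : ℕ) : ∑ i ∈ range m, (m.choose i : ℚ) * βst i = if m = 1 then 1 else 0 := by
  have hβ : ∀ i ∈ range m, (m.choose i : ℚ) * βst i
      = ∑ k ∈ range (m+1), (m.choose i : ℚ) * ((-1)^k * St i k / ((k:ℚ)+1)) := by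
    intro i hi
    have hext : βst i = ∑ k ∈ range (m+1), (-1)^k * St i k / ((k:ℚ)+1) :=
      sum_St_ext (g := fun k v => (-1)^k * v / ((k:ℚ)+1)) (fun k => by simp)
        (N := m+1) (by simp only [Finset.mem_range] at hi; omega)
    rw [hext, Finset.mul_sum]
  rw [Finset.sum_congr rfl hβ, Finset.sum_comm]
  have hinner : ∀ k ∈ range (m+1),
      ∑ i ∈ range m, (m.choose i : ℚ) * ((-1)^k * St i k / ((k:ℚ)+1))
      = (-1)^k * St (m+1) (k+1) / (((k:ℚ)+1)*((k:ℚ)+1)) - (-1)^k * St m k / ((k:ℚ)+1) := by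
    intro k _
    have hK := Kst m k
    have hk0 : ((k:ℚ)+1) ≠ 0 := by positivity
    have h1 : ∑ i ∈ range m, (m.choose i : ℚ) * St i k
        = St (m+1) (k+1) / ((k:ℚ)+1) - St m k := by
      have h2 : ∑ i ∈ range (m+1), (m.choose i : ℚ) * St i k
          = ∑ i ∈ range m, (m.choose i : ℚ) * St i k + St m k := by
        rw [Finset.sum_range_succ, Nat.choose_self]; norm_num
      rw [h2] at hK
      push_cast at hK
      field_simp
      linarith
    calc ∑ i ∈ range m, (m.choose i : ℚ) * ((-1)^k * St i k / ((k:ℚ)+1))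
        = ((-1)^k / ((k:ℚ)+1)) * ∑ i ∈ range m, (m.choose i : ℚ) * St i k := by
          rw [Finset.mul_sum]; exact Finset.sum_congr rfl fun i _ => by ring
      _ = _ := by rw [h1]; field_simp
  rw [Finset.sum_congr rfl hinner, Finset.sum_sub_distrib]
  have hM : ∑ k ∈ range (m+1), (-1:ℚ)^k * St (m+1) (k+1) / (((k:ℚ)+1)*((k:ℚ)+1))
      = Lst m + βst m := by
    have e : ∀ k ∈ range (m+1), (-1:ℚ)^k * St (m+1) (k+1) / (((k:ℚ)+1)*((k:ℚ)+1))
        = (-1)^k * St m (k+1) / ((k:ℚ)+1) + (-1)^k * St m k / ((k:ℚ)+1) := by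
      intro k _
      rw [St_succ_succ]
      have hk0 : ((k:ℚ)+1) ≠ 0 := by positivity
      push_cast
      field_simp
    rw [Finset.sum_congr rfl e, Finset.sum_add_distrib]
    congr 1
    have htop : ∑ k ∈ range (m+1), (-1:ℚ)^k * St m (k+1) / ((k:ℚ)+1)
        = ∑ k ∈ range m, (-1:ℚ)^k * St m (k+1) / ((k:ℚ)+1) := by
      rw [Finset.sum_range_succ, St_eq_zero_of_lt (Nat.lt_succ_self m)]
      simp
    rw [htop, Lst, Finset.sum_range_succ']
    have hz : ((-1:ℚ))^(0+1) * St m 0 / ((0:ℕ):ℚ) = 0 := by simp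
    rw [hz, add_zero]
    refine Finset.sum_congr rfl fun k _ => ?_
    push_cast
    ring
  have hβm : ∑ k ∈ range (m+1), (-1:ℚ)^k * St m k / ((k:ℚ)+1) = βst m := rfl
  rw [hM, hβm, Lst_eq]
  ring

lemma βst_eq_bernoulli (m : ℕ) : βst m = bernoulli m := by
  induction m using Nat.strong_induction_on with
  | _ m ih =>
    have h1 := Rst (m+1)
    have h2 := sum_bernoulli (m+1)
    rw [Finset.sum_range_succ] at h1 h2
    have he : ∑ i ∈ range m, ((m+1).choose i : ℚ) * βst i
        = ∑ i ∈ range m, ((m+1).choose i : ℚ) * bernoulli i :=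
      Finset.sum_congr rfl fun i hi => by rw [ih i (Finset.mem_range.mp hi)]
    rw [he] at h1
    rw [Nat.choose_succ_self_right] at h1 h2
    have hm0 : ((m:ℚ)+1) ≠ 0 := by positivity
    have h3 : ((m+1 : ℕ):ℚ) * βst m = ((m+1 : ℕ):ℚ) * bernoulli m := by linarith
    push_cast at h3
    exact mul_left_cancel₀ hm0 h3

open Polynomial MeasureTheory

/-- Iterated "logistic derivative" polynomials: `P 0 = X`, `P (k+1) = (X - X²) * (P k)'`. -/
noncomputable def Plog : ℕ → Polynomial ℝ
  | 0 => X
  | k + 1 => (X - X ^ 2) * derivative (Plog k)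

@[simp] lemma Plog_zero : Plog 0 = X := rfl
lemma Plog_succ (k : ℕ) : Plog (k + 1) = (X - X ^ 2) * derivative (Plog k) := rfl

lemma Plog_coeff : ∀ (m j : ℕ), (Plog m).coeff j
    = (-1) ^ (j + 1) * ((St (m + 1) j : ℚ) : ℝ) / j := by
  intro m
  induction m with
  | zero =>
    intro j
    match j with
    | 0 => simp
    | 1 => simp [St_one]
    | j + 2 =>
      rw [Plog_zero, St_eq_zero_of_lt (by omega : 0 + 1 < j + 2)]
      rw [coeff_X, if_neg (by omega)]
      simp
  | succ m ih =>
    intro j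
    have hD : ∀ i, (derivative (Plog m)).coeff i = (Plog m).coeff (i + 1) * (i + 1) := by
      intro i; rw [coeff_derivative]
    have hmul : Plog (m + 1) = X * derivative (Plog m) - X * (X * derivative (Plog m)) := by
      rw [Plog_succ]; ring
    match j with
    | 0 =>
      rw [hmul, coeff_sub, coeff_X_mul_zero, coeff_X_mul_zero]
      simp
    | 1 =>
      rw [hmul, coeff_sub, show (1:ℕ) = 0 + 1 from rfl, coeff_X_mul, coeff_X_mul,
        coeff_X_mul_zero, hD, ih]
      rw [show St (m + 1 + 1) (0 + 1) = 1 * (St (m+1) 1 + St (m+1) 0) from by rw [St_succ_succ]; norm_num]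
      push_cast
      simp
    | j + 2 =>
      rw [hmul, coeff_sub, show j + 2 = (j + 1) + 1 from rfl, coeff_X_mul, coeff_X_mul,
        coeff_X_mul, hD, hD, ih, ih]
      rw [show St (m + 1 + 1) (j + 1 + 1) = ((j:ℚ) + 1 + 1) * (St (m+1) (j+1+1) + St (m+1) (j+1))
        from by rw [St_succ_succ]; push_cast; ring]
      have h1 : ((j:ℝ) + 1) ≠ 0 := by positivity
      have h2 : ((j:ℝ) + 1 + 1) ≠ 0 := by positivity
      push_cast
      field_simp
      ring

lemma Plog_eval_zero (m : ℕ) : (Plog m).eval 0 = 0 := by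
  match m with
  | 0 => simp
  | m + 1 => simp [Plog_succ]

lemma Plog_eval_one (m : ℕ) (hm : 1 ≤ m) : (Plog m).eval 1 = 0 := by
  match m with
  | m + 1 => simp [Plog_succ]

lemma Plog_natDegree_le (m : ℕ) : (Plog m).natDegree ≤ m + 1 := by
  induction m with
  | zero => simp
  | succ m ih =>
    rw [Plog_succ]
    refine le_trans (natDegree_mul_le) ?_
    have h1 : (X - X ^ 2 : Polynomial ℝ).natDegree ≤ 2 := by compute_degree
    have h2 : (derivative (Plog m)).natDegree ≤ m := by
      refine le_trans (natDegree_derivative_le _) ?_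
      omega
    omega

lemma Plog_ne_zero (m : ℕ) : Plog m ≠ 0 := by
  intro h
  have h1 : (Plog m).coeff (m + 1) = 0 := by rw [h]; simp
  rw [Plog_coeff, St_diag] at h1
  have h2 : ((m + 1).factorial : ℝ) ≠ 0 := by positivity
  have h3 : ((m:ℝ) + 1) ≠ 0 := by positivity
  have h4 : ((-1:ℝ)) ^ (m + 1 + 1) ≠ 0 := by positivity
  push_cast at h1
  field_simp at h1
  rw [mul_zero] at h1
  exact mul_ne_zero h4 h2 h1

open intervalIntegral in
lemma poly_ftc (p : Polynomial ℝ) :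
    ∫ u in (0:ℝ)..1, (derivative p).eval u = p.eval 1 - p.eval 0 := by
  have hd : (deriv fun u => p.eval u) = fun u => (derivative p).eval u :=
    funext fun u => Polynomial.deriv p
  rw [← hd]
  refine integral_deriv_eq_sub (fun u _ => p.differentiableAt) ?_
  rw [hd]
  exact (p.derivative.continuous).intervalIntegrable _ _

/-- `Jlog a b = ∫₀¹ (P a)' (P b)`. -/
noncomputable def Jlog (a b : ℕ) : ℝ :=
  ∫ u in (0:ℝ)..1, (derivative (Plog a)).eval u * (Plog b).eval u

lemma Jlog_shuttle (a b : ℕ) : Jlog (a + 1) b = - Jlog a (b + 1) := by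
  have hibp : Jlog (a + 1) b
      + ∫ u in (0:ℝ)..1, (Plog (a+1)).eval u * (derivative (Plog b)).eval u = 0 := by
    have h1 := poly_ftc (Plog (a+1) * Plog b)
    rw [derivative_mul] at h1
    have h2 : ∫ u in (0:ℝ)..1, (derivative (Plog (a+1)) * Plog b
        + Plog (a+1) * derivative (Plog b)).eval u
        = Jlog (a + 1) b
          + ∫ u in (0:ℝ)..1, (Plog (a+1)).eval u * (derivative (Plog b)).eval u := by
      rw [Jlog]
      rw [← intervalIntegral.integral_add
        (f := fun u => (derivative (Plog (a+1))).eval u * (Plog b).eval u)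
        (g := fun u => (Plog (a+1)).eval u * (derivative (Plog b)).eval u)
        ((Continuous.mul (Polynomial.continuous _) (Polynomial.continuous _)).intervalIntegrable _ _)
        ((Continuous.mul (Polynomial.continuous _) (Polynomial.continuous _)).intervalIntegrable _ _)]
      exact intervalIntegral.integral_congr fun u _ => by simp
    rw [h2] at h1
    rw [h1, eval_mul, eval_mul, Plog_eval_one _ (by omega), Plog_eval_zero]
    ring
  have hswap : ∫ u in (0:ℝ)..1, (Plog (a+1)).eval u * (derivative (Plog b)).eval u
      = Jlog a (b + 1) := by
    rw [Jlog]
    refine intervalIntegral.integral_congr fun u _ => ?_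
    rw [Plog_succ a, Plog_succ b]
    simp only [eval_mul, eval_sub, eval_pow, eval_X]
    ring
  rw [hswap] at hibp
  linarith

lemma Jlog_chain (a : ℕ) : ∀ b, Jlog a b = (-1) ^ a * Jlog 0 (a + b) := by
  induction a with
  | zero => intro b; simp
  | succ a ih =>
    intro b
    rw [Jlog_shuttle, ih (b+1)]
    rw [show a + (b + 1) = a + 1 + b by omega]
    ring

open intervalIntegral in
lemma integral_Plog (m : ℕ) : ∫ u in (0:ℝ)..1, (Plog m).eval u
    = ∑ j ∈ Finset.range (m + 3), (Plog m).coeff j / (j + 1) := by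
  have hdeg : (Plog m).natDegree < m + 3 := by
    have := Plog_natDegree_le m; omega
  have heval : ∀ u : ℝ, (Plog m).eval u
      = ∑ j ∈ Finset.range (m + 3), (Plog m).coeff j * u ^ j :=
    fun u => eval_eq_sum_range' hdeg u
  rw [integral_congr (g := fun u => ∑ j ∈ Finset.range (m + 3), (Plog m).coeff j * u ^ j)
    (fun u _ => heval u)]
  rw [intervalIntegral.integral_finset_sum (f := fun j u => (Plog m).coeff j * u ^ j) (fun j _ =>
    ((continuous_const.mul (continuous_pow j)).intervalIntegrable _ _))]
  refine Finset.sum_congr rfl fun j _ => ?_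
  rw [intervalIntegral.integral_const_mul, integral_pow]
  norm_num
  ring

lemma comb_c (M : ℕ) (hM : 1 ≤ M) :
    ∑ j ∈ Finset.range (M + 2), (-1:ℚ) ^ (j+1) * St M j / (j * (j + 1)) = Lst M + βst M := by
  have hL : Lst M = ∑ j ∈ Finset.range (M + 2), (-1:ℚ) ^ (j + 1) * St M j / j := by
    rw [Lst]
    exact sum_St_ext (g := fun k v => (-1)^(k+1) * v / (k:ℚ)) (fun k => by simp)
      (N := M + 2) (by omega)
  have hβ : βst M = ∑ j ∈ Finset.range (M + 2), (-1:ℚ) ^ j * St M j / (j + 1) := by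
    rw [βst]
    exact sum_St_ext (g := fun k v => (-1)^k * v / ((k:ℚ) + 1)) (fun k => by simp)
      (N := M + 2) (by omega)
  rw [hL, hβ, ← Finset.sum_add_distrib]
  refine Finset.sum_congr rfl fun j _ => ?_
  match j with
  | 0 =>
    have h0 : St M 0 = 0 := by
      match M, hM with
      | M + 1, _ => exact St_succ_zero M
    rw [h0]
    norm_num
  | j + 1 =>
    have h1 : ((j:ℚ) + 1) ≠ 0 := by positivity
    have h2 : ((j:ℚ) + 1 + 1) ≠ 0 := by positivity
    push_cast
    field_simp
    ring

lemma Jlog_zero_val (M : ℕ) (hM : 1 ≤ M) :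
    Jlog 0 M = ((Lst (M + 1) + βst (M + 1) : ℚ) : ℝ) := by
  have h1 : Jlog 0 M = ∫ u in (0:ℝ)..1, (Plog M).eval u := by
    rw [Jlog]
    refine intervalIntegral.integral_congr fun u _ => ?_
    simp [Plog_zero]
  rw [h1, integral_Plog]
  have h2 : ∀ j ∈ Finset.range (M + 3), (Plog M).coeff j / ((j:ℝ) + 1)
      = (((-1:ℚ) ^ (j+1) * St (M + 1) j / (j * (j + 1)) : ℚ) : ℝ) := by
    intro j _
    rw [Plog_coeff]
    push_cast
    by_cases hj : (j:ℝ) = 0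
    · norm_num [hj]
    · field_simp
  rw [Finset.sum_congr rfl h2, ← Rat.cast_sum]
  rw [show M + 3 = (M + 1) + 2 from rfl, comb_c (M + 1) (by omega)]

lemma Plog_sq_eval (m : ℕ) (u : ℝ) :
    (Plog (m+1)).eval u ^ 2
      = (u - u ^ 2) * ((derivative (Plog m)).eval u * (Plog (m+1)).eval u) := by
  conv_lhs => rw [pow_two, Plog_succ]
  rw [Plog_succ]
  simp only [eval_mul, eval_sub, eval_pow, eval_X]
  ring

lemma Jlog_pos (m : ℕ) : 0 < Jlog m (m + 1) := by
  rw [Jlog, intervalIntegral.integral_of_le (zero_le_one),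
    MeasureTheory.integral_Ioc_eq_integral_Ioo]
  set f : ℝ → ℝ := fun u => (derivative (Plog m)).eval u * (Plog (m+1)).eval u with hfdef
  have hfc : Continuous f := ((Plog m).derivative.continuous).mul ((Plog (m+1)).continuous)
  have hnonneg : ∀ u ∈ Set.Ioo (0:ℝ) 1, 0 ≤ f u := by
    intro u hu
    have hpos : 0 < u - u ^ 2 := by nlinarith [hu.1, hu.2]
    have hk := Plog_sq_eval m u
    show 0 ≤ (derivative (Plog m)).eval u * (Plog (m+1)).eval u
    nlinarith [sq_nonneg ((Plog (m+1)).eval u)]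
  have hint : IntegrableOn f (Set.Ioo (0:ℝ) 1) volume := by
    have h := hfc.intervalIntegrable (μ := volume) (0:ℝ) 1
    rw [intervalIntegrable_iff_integrableOn_Icc_of_le zero_le_one,
      integrableOn_Icc_iff_integrableOn_Ioo] at h
    exact h
  have hae : 0 ≤ᵐ[volume.restrict (Set.Ioo (0:ℝ) 1)] f :=
    (ae_restrict_iff' measurableSet_Ioo).mpr (Filter.Eventually.of_forall hnonneg)
  refine (setIntegral_pos_iff_support_of_nonneg_ae hae hint).mpr ?_
  have hR : {u : ℝ | (Plog (m+1)).IsRoot u}.Finite :=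
    Polynomial.finite_setOf_isRoot (Plog_ne_zero _)
  have hsub : Set.Ioo (0:ℝ) 1 \ {u | (Plog (m+1)).IsRoot u}
      ⊆ Function.support f ∩ Set.Ioo 0 1 := by
    intro u hu
    obtain ⟨hu1, hu2⟩ := hu
    refine ⟨?_, hu1⟩
    intro hfu
    apply hu2
    have hpos : 0 < u - u ^ 2 := by nlinarith [hu1.1, hu1.2]
    have hk := Plog_sq_eval m u
    rw [show (derivative (Plog m)).eval u * (Plog (m+1)).eval u = f u from rfl, hfu,
      mul_zero] at hk
    exact sq_eq_zero_iff.mp hk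
  calc (0:ENNReal) < volume (Set.Ioo (0:ℝ) 1 \ {u | (Plog (m+1)).IsRoot u}) := by
        rw [measure_diff_null (hR.measure_zero volume)]
        simp
    _ ≤ _ := measure_mono hsub

lemma Jlog_val (n : ℕ) (hn : 2 ≤ n) :
    Jlog (n - 1) n = (-1:ℝ) ^ (n-1) * ((bernoulli (2*n) : ℚ) : ℝ) := by
  rw [Jlog_chain (n-1) n, Jlog_zero_val (n - 1 + n) (by omega)]
  rw [show n - 1 + n + 1 = 2 * n by omega, Lst_eq, βst_eq_bernoulli, if_neg (by omega)]
  push_cast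
  ring

lemma bern_abs (n : ℕ) (hn : 2 ≤ n) :
    |((bernoulli (2*n) : ℚ) : ℝ)| = Jlog (n - 1) n ∧ ((bernoulli (2*n) : ℚ) : ℝ) ≠ 0 := by
  have hpos : 0 < Jlog (n - 1) n := by
    have := Jlog_pos (n - 1)
    rwa [show n - 1 + 1 = n by omega] at this
  have hval := Jlog_val n hn
  set B := ((bernoulli (2*n) : ℚ) : ℝ) with hB
  have hs : (-1:ℝ) ^ (n-1) = 1 ∨ (-1:ℝ) ^ (n-1) = -1 := by
    rcases Nat.even_or_odd (n-1) with h | h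
    exacts [Or.inl h.neg_one_pow, Or.inr h.neg_one_pow]
  rcases hs with h | h <;> rw [h] at hval
  · rw [one_mul] at hval
    rw [hval] at hpos
    constructor
    · rw [hval, abs_of_pos hpos]
    · exact ne_of_gt hpos
  · have hBneg : B < 0 := by nlinarith
    constructor
    · rw [hval, abs_of_neg hBneg]; ring
    · exact ne_of_lt hBneg

/-- The standard logistic function. -/
noncomputable def xl : ℝ → ℝ := fun t => 1 / (1 + Real.exp (-t))

lemma xl_def (t : ℝ) : xl t = 1 / (1 + Real.exp (-t)) := rfl

lemma xl_denom_pos (t : ℝ) : 0 < 1 + Real.exp (-t) := by positivity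

lemma xl_mem (t : ℝ) : xl t ∈ Set.Ioo (0:ℝ) 1 := by
  constructor
  · exact div_pos one_pos (xl_denom_pos t)
  · rw [xl_def, div_lt_one (xl_denom_pos t)]
    have := Real.exp_pos (-t)
    linarith

lemma xl_continuous : Continuous xl := by
  apply Continuous.div continuous_const
  · exact continuous_const.add (Real.continuous_exp.comp continuous_neg)
  · exact fun t => ne_of_gt (xl_denom_pos t)

lemma xl_hasDeriv (t : ℝ) : HasDerivAt xl (xl t - xl t ^ 2) t := by
  have h1 : HasDerivAt (fun s : ℝ => -s) (-1) t := (hasDerivAt_id t).neg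
  have h2 : HasDerivAt (fun s : ℝ => Real.exp (-s)) (Real.exp (-t) * (-1)) t :=
    (Real.hasDerivAt_exp (-t)).comp t h1
  have h3 : HasDerivAt (fun s : ℝ => 1 + Real.exp (-s)) (-Real.exp (-t)) t := by
    simpa using h2.const_add 1
  have h4 := h3.inv (ne_of_gt (xl_denom_pos t))
  have h5 : xl = fun s : ℝ => (1 + Real.exp (-s))⁻¹ := by
    funext s; rw [xl_def, one_div]
  have hd := ne_of_gt (xl_denom_pos t)
  rw [show xl t - xl t ^ 2 = - -Real.exp (-t) / (1 + Real.exp (-t)) ^ 2 from by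
    rw [xl_def]; field_simp; ring, h5]
  exact h4

lemma xl_inj : Function.Injective xl := by
  intro a b hab
  have h2 := congrArg (fun y : ℝ => y⁻¹) hab
  rw [xl_def, xl_def] at h2
  simp only [one_div, inv_inv] at h2
  have : Real.exp (-a) = Real.exp (-b) := by linarith
  have := Real.exp_injective this
  linarith

lemma xl_range : Set.range xl = Set.Ioo 0 1 := by
  ext u
  constructor
  · rintro ⟨t, rfl⟩; exact xl_mem t
  · rintro ⟨h0, h1⟩
    refine ⟨Real.log (u / (1 - u)), ?_⟩
    have h1u : 0 < 1 - u := by linarith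
    have hq : 0 < u / (1 - u) := div_pos h0 h1u
    rw [xl_def, ← Real.log_inv, Real.exp_log (by positivity), inv_div]
    rw [show 1 + (1 - u) / u = 1 / u from by field_simp; ring, one_div_one_div]

lemma xl_iteratedDeriv (m : ℕ) : ∀ t, iteratedDeriv m xl t = (Plog m).eval (xl t) := by
  induction m with
  | zero => intro t; simp
  | succ m ih =>
    intro t
    rw [iteratedDeriv_succ, funext ih]
    have hd : HasDerivAt (fun s => (Plog m).eval (xl s))
        ((derivative (Plog m)).eval (xl t) * (xl t - xl t ^ 2)) t :=
      HasDerivAt.comp t ((Plog m).hasDerivAt (xl t)) (xl_hasDeriv t)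
    rw [hd.deriv, Plog_succ]
    simp only [eval_mul, eval_sub, eval_pow, eval_X]
    ring

/-- For n ≥ 2, the normalized logistic wavelet
ψ_n(t) = x⁽ⁿ⁾(t)/√|B_{2n}| (with x the standard logistic function) belongs to L²(ℝ)
and has L² norm 1, i.e. ∫ ψ_n(t)² dt = 1. -/
theorem normalized_logistic_wavelet_norm_one
    (x : ℝ → ℝ) (hx : ∀ t, x t = 1 / (1 + Real.exp (-t)))
    (n : ℕ) (hn : 2 ≤ n)
    (ψ : ℝ → ℝ)
    (hψ : ∀ t, ψ t = iteratedDeriv n x t / Real.sqrt |(bernoulli (2 * n) : ℝ)|) :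
    MemLp ψ 2 (volume : Measure ℝ) ∧ (∫ t : ℝ, ψ t ^ 2) = 1 := by
  have hxl : x = xl := funext fun t => hx t
  set B : ℝ := ((bernoulli (2*n) : ℚ) : ℝ) with hBdef
  obtain ⟨habs, hne⟩ := bern_abs n hn
  have hBpos : 0 < |B| := abs_pos.mpr hne
  set G : Polynomial ℝ := derivative (Plog (n-1)) * Plog n with hGdef
  have hψeq : ∀ t, ψ t = (Plog n).eval (xl t) / Real.sqrt |B| := by
    intro t
    rw [hψ t, hxl, xl_iteratedDeriv]
  have hderpos : ∀ t, 0 < xl t - xl t ^ 2 := by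
    intro t
    obtain ⟨h0, h1⟩ := xl_mem t
    nlinarith
  have hsq : ∀ t, ψ t ^ 2 = |B|⁻¹ * (|xl t - xl t ^ 2| * G.eval (xl t)) := by
    intro t
    rw [hψeq t, div_pow, Real.sq_sqrt (abs_nonneg _)]
    have hx1 : (Plog n).eval (xl t) ^ 2 = (xl t - xl t ^ 2) * (G.eval (xl t)) := by
      have h := Plog_sq_eval (n-1) (xl t)
      rw [show n - 1 + 1 = n by omega] at h
      rw [h, hGdef, eval_mul]
    rw [hx1, abs_of_pos (hderpos t), div_eq_mul_inv]
    ring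
  have hderivW : ∀ t ∈ Set.univ, HasDerivWithinAt xl (xl t - xl t ^ 2) Set.univ t :=
    fun t _ => (xl_hasDeriv t).hasDerivWithinAt
  have hinj : Set.InjOn xl Set.univ := xl_inj.injOn
  have himg : xl '' Set.univ = Set.Ioo 0 1 := by rw [Set.image_univ, xl_range]
  have hGint : IntegrableOn (fun u => G.eval u) (Set.Ioo (0:ℝ) 1) volume := by
    have h := (G.continuous).intervalIntegrable (μ := volume) (0:ℝ) 1
    rwa [intervalIntegrable_iff_integrableOn_Icc_of_le zero_le_one,
      integrableOn_Icc_iff_integrableOn_Ioo] at h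
  have hcv := integral_image_eq_integral_abs_deriv_smul MeasurableSet.univ hderivW hinj
    (fun u => G.eval u)
  rw [himg, Measure.restrict_univ] at hcv
  simp only [smul_eq_mul] at hcv
  have hIoo : ∫ u in Set.Ioo (0:ℝ) 1, G.eval u = Jlog (n-1) n := by
    rw [Jlog, intervalIntegral.integral_of_le zero_le_one, integral_Ioc_eq_integral_Ioo]
    refine setIntegral_congr_fun measurableSet_Ioo fun u _ => ?_
    rw [hGdef, eval_mul]
  have hintcomp : Integrable (fun t => |xl t - xl t ^ 2| * G.eval (xl t)) volume := by
    have h := (integrableOn_image_iff_integrableOn_abs_deriv_smul MeasurableSet.univ hderivW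
      hinj (fun u => G.eval u)).mp (by rw [himg]; exact hGint)
    rw [integrableOn_univ] at h
    simpa only [smul_eq_mul] using h
  have hψ2int : Integrable (fun t => ψ t ^ 2) volume := by
    have h := hintcomp.const_mul |B|⁻¹
    exact h.congr (Filter.Eventually.of_forall fun t => (hsq t).symm)
  have hψcont : Continuous ψ := by
    rw [funext hψeq]
    exact ((Plog n).continuous.comp xl_continuous).div_const _
  refine ⟨(memLp_two_iff_integrable_sq hψcont.aestronglyMeasurable).mpr hψ2int, ?_⟩
  calc ∫ t : ℝ, ψ t ^ 2
      = ∫ t : ℝ, |B|⁻¹ * (|xl t - xl t ^ 2| * G.eval (xl t)) :=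
        integral_congr_ae (Filter.Eventually.of_forall hsq)
    _ = |B|⁻¹ * ∫ t : ℝ, |xl t - xl t ^ 2| * G.eval (xl t) := integral_const_mul _ _
    _ = |B|⁻¹ * ∫ u in Set.Ioo (0:ℝ) 1, G.eval u := by rw [← hcv]
    _ = |B|⁻¹ * Jlog (n-1) n := by rw [hIoo]
    _ = 1 := by rw [← habs, inv_mul_cancel₀ (ne_of_gt hBpos)]
end

section
/- Let a > 0, b ∈ ℝ, y_max > 0, and let y(t) = y_max/(1 + exp(−(t − b)/a)). Let ψ_2 be the second-order normalized logistic wavelet and ψ_2^{a,b}(t) = a^{−1/2} ψ_2((t − b)/a). Then for all t ∈ ℝ, y''(t) = (y_max/(√30 · a^{3/2})) · ψ_2^{a,b}(t). -/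
/-- For y(t) = y_max/(1 + e^{−(t−b)/a}) with a > 0, y_max > 0, and the
second-order normalized logistic wavelet ψ₂, with ψ₂^{a,b}(t) = a^{−1/2} ψ₂((t − b)/a),
one has y''(t) = (y_max/(√30 · a^{3/2})) · ψ₂^{a,b}(t). -/
theorem second_deriv_logistic_as_wavelet
    (a b ymax : ℝ) (ha : 0 < a) (hymax : 0 < ymax)
    (y : ℝ → ℝ) (hy : ∀ t, y t = ymax / (1 + Real.exp (-((t - b) / a))))
    (ψ₂ : ℝ → ℝ)
    (hψ₂ : ∀ t, ψ₂ t =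
      Real.sqrt 30 * (Real.exp (-2 * t) - Real.exp (-t)) / (1 + Real.exp (-t)) ^ 3)
    (ψ₂ab : ℝ → ℝ) (hψ₂ab : ∀ t, ψ₂ab t = (1 / Real.sqrt a) * ψ₂ ((t - b) / a)) :
    ∀ t : ℝ,
      iteratedDeriv 2 y t = ymax / (Real.sqrt 30 * a ^ ((3 : ℝ) / 2)) * ψ₂ab t := by
  intro t
  set E : ℝ → ℝ := fun t => Real.exp (-((t - b) / a)) with hE
  have ha' : a ≠ 0 := ne_of_gt ha
  have hpos : ∀ s, 0 < 1 + E s := fun s => by positivity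
  have hne : ∀ s, 1 + E s ≠ 0 := fun s => ne_of_gt (hpos s)
  -- derivative of E
  have hEd : ∀ s, HasDerivAt E (-a⁻¹ * E s) s := by
    intro s
    have h1 : HasDerivAt (fun t : ℝ => -((t - b) / a)) (-a⁻¹) s := by
      exact (((hasDerivAt_id s).sub_const b).div_const a).neg.congr_deriv (by simp)
    simpa [mul_comm] using h1.exp
  -- derivative of inverse denominator
  have hPd : ∀ s, HasDerivAt (fun t => (1 + E t)⁻¹) (a⁻¹ * E s * ((1 + E s)⁻¹) ^ 2) s := by
    intro s
    have h2 : HasDerivAt (fun t => 1 + E t) (-a⁻¹ * E s) s := (hEd s).const_add 1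
    have h3 := h2.inv (hne s)
    have : -(-a⁻¹ * E s) / (1 + E s) ^ 2 = a⁻¹ * E s * ((1 + E s)⁻¹) ^ 2 := by
      field_simp
    rwa [this] at h3
  -- first derivative of y
  have hyfun : y = fun t => ymax * (1 + E t)⁻¹ := by
    funext s; rw [hy s]; rw [div_eq_mul_inv]
  have hy1 : ∀ s, HasDerivAt y (ymax * a⁻¹ * (E s * ((1 + E s)⁻¹) ^ 2)) s := by
    intro s
    rw [hyfun]
    have := (hPd s).const_mul ymax
    exact this.congr_deriv (by ring)
  have hderiv1 : deriv y = fun s => ymax * a⁻¹ * (E s * ((1 + E s)⁻¹) ^ 2) :=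
    funext fun s => (hy1 s).deriv
  -- second derivative
  have hy2 : ∀ s, HasDerivAt (fun s => ymax * a⁻¹ * (E s * ((1 + E s)⁻¹) ^ 2))
      (ymax * a⁻¹ * ((-a⁻¹ * E s) * ((1 + E s)⁻¹) ^ 2
        + E s * (2 * (1 + E s)⁻¹ * (a⁻¹ * E s * ((1 + E s)⁻¹) ^ 2)))) s := by
    intro s
    have hsq : HasDerivAt (fun t => ((1 + E t)⁻¹) ^ 2)
        (2 * (1 + E s)⁻¹ * (a⁻¹ * E s * ((1 + E s)⁻¹) ^ 2)) s := by
      have := (hPd s).pow 2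
      exact this.congr_deriv (by simp only [Nat.cast_ofNat, Nat.add_one_sub_one, pow_one])
    exact ((hEd s).mul hsq).const_mul (ymax * a⁻¹)
  have h2d : iteratedDeriv 2 y t
      = ymax * a⁻¹ * ((-a⁻¹ * E t) * ((1 + E t)⁻¹) ^ 2
        + E t * (2 * (1 + E t)⁻¹ * (a⁻¹ * E t * ((1 + E t)⁻¹) ^ 2))) := by
    rw [iteratedDeriv_succ, iteratedDeriv_one, hderiv1]
    exact (hy2 t).deriv
  -- rewrite the RHS
  have hexp2 : Real.exp (-2 * ((t - b) / a)) = E t ^ 2 := by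
    rw [hE]
    rw [show (-2 * ((t - b) / a)) = (-((t - b) / a)) + (-((t - b) / a)) by ring,
      Real.exp_add, sq]
  have hsqrt30 : Real.sqrt 30 ≠ 0 := by positivity
  have hsqrta : Real.sqrt a ≠ 0 := by positivity
  have hrpow : a ^ ((3:ℝ)/2) * Real.sqrt a = a ^ 2 := by
    rw [Real.sqrt_eq_rpow, ← Real.rpow_add ha, ← Real.rpow_natCast a 2]
    norm_num
  have hrpne : a ^ ((3:ℝ)/2) ≠ 0 := by positivity
  rw [h2d, hψ₂ab, hψ₂, hexp2]
  -- simplify the constant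
  have hc : ymax / (Real.sqrt 30 * a ^ ((3:ℝ)/2)) * (1 / Real.sqrt a) * Real.sqrt 30
      = ymax / a ^ 2 := by
    field_simp
    linear_combination (-1 : ℝ) * hrpow
  have hrhs : ymax / (Real.sqrt 30 * a ^ ((3:ℝ)/2)) *
      (1 / Real.sqrt a *
        (Real.sqrt 30 * (E t ^ 2 - E t) / (1 + E t) ^ 3))
      = ymax / a ^ 2 * ((E t ^ 2 - E t) / (1 + E t) ^ 3) := by
    rw [show ymax / (Real.sqrt 30 * a ^ ((3:ℝ)/2)) *
        (1 / Real.sqrt a * (Real.sqrt 30 * (E t ^ 2 - E t) / (1 + E t) ^ 3))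
        = (ymax / (Real.sqrt 30 * a ^ ((3:ℝ)/2)) * (1 / Real.sqrt a) * Real.sqrt 30)
          * ((E t ^ 2 - E t) / (1 + E t) ^ 3) from by ring, hc]
  rw [hrhs]
  have hneu := hne t
  generalize E t = u at hneu ⊢
  field_simp
  ring
end

section
/- Let a > 0, b ∈ ℝ, y_max > 0, and let y(t) = y_max/(1 + exp(−(t − b)/a)). Let ψ_2 be the second-order normalized logistic wavelet and ψ_2^{a,b}(t) = a^{−1/2} ψ_2((t − b)/a). Then the continuous wavelet transform of y'' at (a,b) satisfies ∫_{−∞}^{∞} y''(t) · ψ_2^{a,b}(t) dt = y_max/(√30 · a^{3/2}); equivalently, y_max = √30 · a^{3/2} · ∫_{−∞}^{∞} y''(t) ψ_2^{a,b}(t) dt. -/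
open Real MeasureTheory Filter Set Topology

noncomputable def lwG (u : ℝ) : ℝ := (Real.exp (-2 * u) - Real.exp (-u)) / (1 + Real.exp (-u)) ^ 3
noncomputable def lwSig (u : ℝ) : ℝ := (1 + Real.exp (-u))⁻¹
noncomputable def lwSp (u : ℝ) : ℝ := Real.exp (-u) / (1 + Real.exp (-u)) ^ 2
noncomputable def lwF (u : ℝ) : ℝ :=
  lwSig u ^ 2 / 2 - 5 * lwSig u ^ 3 / 3 + 2 * lwSig u ^ 4 - 4 * lwSig u ^ 5 / 5

lemma lw_dpos (u : ℝ) : (0:ℝ) < 1 + Real.exp (-u) := by positivity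

lemma lw_exp2 (u : ℝ) : Real.exp (-2 * u) = Real.exp (-u) * Real.exp (-u) := by
  rw [← Real.exp_add]; ring_nf

lemma lw_hasDerivAt_expneg (u : ℝ) :
    HasDerivAt (fun x : ℝ => Real.exp (-x)) (-Real.exp (-u)) u := by
  simpa [Function.comp_def] using (Real.hasDerivAt_exp (-u)).comp u (hasDerivAt_neg u)

lemma lwSig_hasDerivAt (u : ℝ) : HasDerivAt lwSig (lwSp u) u := by
  have h := ((lw_hasDerivAt_expneg u).const_add 1).inv (lw_dpos u).ne'
  refine h.congr_deriv ?_
  unfold lwSp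
  field_simp

lemma lwSp_hasDerivAt (u : ℝ) : HasDerivAt lwSp (lwG u) u := by
  have hden := ((lw_hasDerivAt_expneg u).const_add 1).pow 2
  have h := (lw_hasDerivAt_expneg u).div hden (pow_ne_zero 2 (lw_dpos u).ne')
  refine h.congr_deriv ?_
  unfold lwG
  rw [lw_exp2]
  have hd := (lw_dpos u).ne'
  simp only [Pi.pow_apply]
  field_simp
  ring

lemma lwF_hasDerivAt (u : ℝ) : HasDerivAt lwF (lwG u ^ 2) u := by
  have hs := lwSig_hasDerivAt u
  have h := ((((hs.pow 2).div_const 2).sub (((hs.pow 3).const_mul 5).div_const 3)).add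
      ((hs.pow 4).const_mul 2)).sub (((hs.pow 5).const_mul 4).div_const 5)
  refine h.congr_deriv ?_
  unfold lwG lwSig lwSp
  rw [lw_exp2]
  have hd := (lw_dpos u).ne'
  simp only [Pi.pow_apply, inv_pow]
  field_simp
  ring

lemma lwSig_tendsto_atTop : Tendsto lwSig atTop (𝓝 1) := by
  have h : Tendsto (fun u : ℝ => Real.exp (-u)) atTop (𝓝 0) :=
    Real.tendsto_exp_atBot.comp tendsto_neg_atTop_atBot
  have := (tendsto_const_nhds.add h).inv₀ (by norm_num : (1:ℝ) + 0 ≠ 0)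
  simp only [add_zero, inv_one] at this
  exact this

lemma lwSig_tendsto_atBot : Tendsto lwSig atBot (𝓝 0) := by
  have h : Tendsto (fun u : ℝ => Real.exp (-u)) atBot atTop :=
    Real.tendsto_exp_atTop.comp tendsto_neg_atBot_atTop
  have h2 : Tendsto (fun u : ℝ => 1 + Real.exp (-u)) atBot atTop :=
    tendsto_atTop_add_const_left _ 1 h
  exact h2.inv_tendsto_atTop

lemma lwF_tendsto_atTop : Tendsto lwF atTop (𝓝 (1/30)) := by
  have hc : Continuous fun s : ℝ => s ^ 2 / 2 - 5 * s ^ 3 / 3 + 2 * s ^ 4 - 4 * s ^ 5 / 5 := by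
    continuity
  have := (hc.tendsto 1).comp lwSig_tendsto_atTop
  norm_num at this
  convert this using 1
  exact rfl

lemma lwF_tendsto_atBot : Tendsto lwF atBot (𝓝 0) := by
  have hc : Continuous fun s : ℝ => s ^ 2 / 2 - 5 * s ^ 3 / 3 + 2 * s ^ 4 - 4 * s ^ 5 / 5 := by
    continuity
  have := (hc.tendsto 0).comp lwSig_tendsto_atBot
  norm_num at this
  convert this using 1
  exact rfl

lemma lwG_continuous : Continuous lwG := by
  apply Continuous.div (by continuity) (by continuity)
  intro u; positivity

lemma lwG_sq_le (u : ℝ) : ‖lwG u ^ 2‖ ≤ Real.exp u := by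
  have hE : 0 < Real.exp (-u) := Real.exp_pos _
  set E := Real.exp (-u) with hEdef
  have hund : lwG u ^ 2 = (E * E - E) ^ 2 / (1 + E) ^ 6 := by
    unfold lwG; rw [lw_exp2, div_pow, ← hEdef]; ring_nf
  have hexpu : Real.exp u = E⁻¹ := by
    rw [hEdef, ← Real.exp_neg]; ring_nf
  rw [Real.norm_eq_abs, abs_of_nonneg (sq_nonneg _), hund, hexpu, inv_eq_one_div,
    div_le_div_iff₀ (by positivity) hE]
  nlinarith [pow_nonneg hE.le 3, pow_nonneg hE.le 4, pow_nonneg hE.le 5,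
    pow_nonneg hE.le 6, sq_nonneg E, hE.le]

lemma lwG_sq_integrable : Integrable (fun u => lwG u ^ 2) := by
  have hIoi : IntegrableOn (fun u => lwG u ^ 2) (Ioi 0) :=
    integrableOn_Ioi_deriv_of_nonneg' (fun x _ => lwF_hasDerivAt x)
      (fun x _ => sq_nonneg _) lwF_tendsto_atTop
  have hIic : IntegrableOn (fun u => lwG u ^ 2) (Iic 0) := by
    apply Integrable.mono' (integrableOn_exp_Iic 0)
      ((lwG_continuous.pow 2).aestronglyMeasurable.restrict)
    exact ae_of_all _ fun u => lwG_sq_le u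
  have h := hIic.union hIoi
  rw [Iic_union_Ioi] at h
  rwa [← integrableOn_univ]

lemma lwG_sq_integral : ∫ u : ℝ, lwG u ^ 2 = 1 / 30 := by
  have := integral_of_hasDerivAt_of_tendsto (fun x => lwF_hasDerivAt x)
    lwG_sq_integrable lwF_tendsto_atBot lwF_tendsto_atTop
  simpa using this

/-- For y(t) = y_max/(1 + e^{−(t−b)/a}) with a > 0, y_max > 0, and the
second-order normalized logistic wavelet ψ₂ with ψ₂^{a,b}(t) = a^{−1/2} ψ₂((t − b)/a),
the CWT of y'' at (a,b) equals y_max/(√30·a^{3/2}); equivalently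
y_max = √30 · a^{3/2} · ∫ y''(t) ψ₂^{a,b}(t) dt. -/
theorem cwt_of_logistic_second_deriv
    (a b ymax : ℝ) (ha : 0 < a) (hymax : 0 < ymax)
    (y : ℝ → ℝ) (hy : ∀ t, y t = ymax / (1 + Real.exp (-((t - b) / a))))
    (ψ₂ : ℝ → ℝ)
    (hψ₂ : ∀ t, ψ₂ t =
      Real.sqrt 30 * (Real.exp (-2 * t) - Real.exp (-t)) / (1 + Real.exp (-t)) ^ 3)
    (ψ₂ab : ℝ → ℝ) (hψ₂ab : ∀ t, ψ₂ab t = (1 / Real.sqrt a) * ψ₂ ((t - b) / a)) :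
    (∫ t : ℝ, iteratedDeriv 2 y t * ψ₂ab t) = ymax / (Real.sqrt 30 * a ^ ((3 : ℝ) / 2)) ∧
    ymax = Real.sqrt 30 * a ^ ((3 : ℝ) / 2) * ∫ t : ℝ, iteratedDeriv 2 y t * ψ₂ab t := by
  have hsa : 0 < Real.sqrt a := Real.sqrt_pos.mpr ha
  have hs30 : 0 < Real.sqrt 30 := Real.sqrt_pos.mpr (by norm_num)
  have hsaa : Real.sqrt a * Real.sqrt a = a := Real.mul_self_sqrt ha.le
  have hs3030 : Real.sqrt 30 * Real.sqrt 30 = 30 := Real.mul_self_sqrt (by norm_num)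
  have h32 : a ^ ((3 : ℝ) / 2) = a * Real.sqrt a := by
    rw [show (3:ℝ)/2 = 1 + 1/2 by norm_num, Real.rpow_add ha, Real.rpow_one,
      ← Real.sqrt_eq_rpow]
  -- the affine map
  have haff : ∀ t : ℝ, HasDerivAt (fun t : ℝ => (t - b) / a) (1 / a) t := by
    intro t
    simpa using ((hasDerivAt_id t).sub_const b).div_const a
  -- y in terms of lwSig
  have hy' : y = fun t => ymax * lwSig ((t - b) / a) := by
    funext t; rw [hy]; unfold lwSig; rw [div_eq_mul_inv]
  have hy1 : ∀ t : ℝ, HasDerivAt y (ymax * (lwSp ((t - b) / a) * (1 / a))) t := by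
    intro t; rw [hy']
    exact ((lwSig_hasDerivAt _).comp t (haff t)).const_mul ymax
  have dy : deriv y = fun t => ymax * (lwSp ((t - b) / a) * (1 / a)) :=
    funext fun t => (hy1 t).deriv
  have hy2 : ∀ t : ℝ, HasDerivAt (deriv y)
      (ymax * (lwG ((t - b) / a) * (1 / a) * (1 / a))) t := by
    intro t; rw [dy]
    exact (((lwSp_hasDerivAt _).comp t (haff t)).mul_const (1 / a)).const_mul ymax
  have key : ∀ t : ℝ, iteratedDeriv 2 y t = ymax / a ^ 2 * lwG ((t - b) / a) := by
    intro t
    have h2 : iteratedDeriv 2 y = deriv (deriv y) := by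
      rw [iteratedDeriv_succ, iteratedDeriv_succ, iteratedDeriv_zero]
    rw [h2, (hy2 t).deriv]
    ring
  -- pointwise rewrite of the integrand
  set C : ℝ := ymax * Real.sqrt 30 / (a ^ 2 * Real.sqrt a) with hC
  have hpt : (fun t : ℝ => iteratedDeriv 2 y t * ψ₂ab t)
      = fun t : ℝ => (fun x : ℝ => C * lwG (x / a) ^ 2) (t - b) := by
    funext t
    have hpsi : ψ₂ ((t - b) / a) = Real.sqrt 30 * lwG ((t - b) / a) := by
      rw [hψ₂]; unfold lwG; ring
    simp only
    rw [key t, hψ₂ab, hpsi]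
    ring
  have hval : (∫ t : ℝ, iteratedDeriv 2 y t * ψ₂ab t)
      = ymax / (Real.sqrt 30 * a ^ ((3 : ℝ) / 2)) := by
    rw [hpt, integral_sub_right_eq_self (fun x : ℝ => C * lwG (x / a) ^ 2) b,
      MeasureTheory.Measure.integral_comp_div (fun x : ℝ => C * lwG x ^ 2) a,
      MeasureTheory.integral_const_mul, lwG_sq_integral, abs_of_pos ha, smul_eq_mul, h32, hC]
    field_simp
    linear_combination hs3030
  refine ⟨hval, ?_⟩
  rw [hval, h32]
  field_simp
end
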